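/- arXiv:1910.14527 — 6 statements merged into one kernel-verified Lean document; each statement's English description precedes it below -/
import Mathlib

section
/- Let d be a positive integer and let Ω ⊆ ℝ^d be a locally compact set. Let φ be any gauge and let ψ be a gauge with liminf_{r→0+} ψ(r)/r^{d-1} = 0. Then for a typical function f ∈ C(Ω) (i.e., for all f in some comeager subset of C(Ω)), the lower box-counting measure ν^ψ of the set {x ∈ Ω : lip_φ f(x) > 0} is zero. -/
open Filter Set Topology MeasureTheory
open scoped ENNReal NNReal

noncomputable section

/-- A gauge: nondecreasing on `[0,∞)`, right-continuous, `φ 0 = 0`, positive on `(0,∞)`. -/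
def IsGauge (φ : ℝ → ℝ) : Prop :=
  (∀ ⦃a b : ℝ⦄, 0 ≤ a → a ≤ b → φ a ≤ φ b) ∧
  (∀ a : ℝ, 0 ≤ a → ContinuousWithinAt φ (Set.Ici a) a) ∧
  φ 0 = 0 ∧ (∀ r : ℝ, 0 < r → 0 < φ r)

/-- `N_δ(E)`: the least number of sets of diameter at most `δ` needed to cover `E`. -/
def coverNum {X : Type*} [PseudoMetricSpace X] (δ : ℝ) (E : Set X) : ℝ≥0∞ :=
  ⨅ (n : ℕ) (_ : ∃ F : Fin n → Set X,
    (∀ i, EMetric.diam (F i) ≤ ENNReal.ofReal δ) ∧ E ⊆ ⋃ i, F i), (n : ℝ≥0∞)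

/-- `ν_0^ζ(E) = liminf_{δ→0+} N_δ(E)·ζ(δ)`. -/
def nu0 {X : Type*} [PseudoMetricSpace X] (ζ : ℝ → ℝ) (E : Set X) : ℝ≥0∞ :=
  Filter.liminf (fun δ : ℝ => coverNum δ E * ENNReal.ofReal (ζ δ)) (𝓝[>] (0:ℝ))

/-- The lower box-counting measure `ν^ζ`. -/
def lowerBoxMeasure {X : Type*} [PseudoMetricSpace X] (ζ : ℝ → ℝ) (E : Set X) : ℝ≥0∞ :=
  ⨅ (G : ℕ → Set X) (_ : E ⊆ ⋃ n, G n), ∑' n, nu0 ζ (G n)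

/-- The lower box dimension `lbdim E = liminf_{r→0+} log N_r(E)/|log r|`. -/
def lbdim {X : Type*} [PseudoMetricSpace X] (E : Set X) : EReal :=
  Filter.liminf (fun r : ℝ => ENNReal.log (coverNum r E) * ((|Real.log r|⁻¹ : ℝ) : EReal))
    (𝓝[>] (0:ℝ))

/-- The lower packing dimension. -/
def lpdim {X : Type*} [PseudoMetricSpace X] (E : Set X) : EReal :=
  ⨅ (G : ℕ → Set X) (_ : E ⊆ ⋃ n, G n), ⨆ n, lbdim (G n)

/-- The generalized lower scaled oscillation `lip_φ f`. -/
def lipGauge {X : Type*} [PseudoMetricSpace X] (φ : ℝ → ℝ) (f : X → ℝ) (x : X) : ℝ≥0∞ :=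
  Filter.liminf
    (fun r : ℝ => EMetric.diam (f '' Metric.closedBall x r) / ENNReal.ofReal (φ r))
    (𝓝[>] (0:ℝ))

/-- The upper scaled oscillation `Lip f`. -/
def LipGauge {X : Type*} [PseudoMetricSpace X] (φ : ℝ → ℝ) (f : X → ℝ) (x : X) : ℝ≥0∞ :=
  Filter.limsup
    (fun r : ℝ => EMetric.diam (f '' Metric.closedBall x r) / ENNReal.ofReal (φ r))
    (𝓝[>] (0:ℝ))

/-- The Hausdorff measure with gauge `ξ`. -/
def hausdorffGauge {X : Type*} [PseudoMetricSpace X] (ξ : ℝ → ℝ) (E : Set X) : ℝ≥0∞ :=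
  ⨆ (δ : ℝ) (_ : 0 < δ), ⨅ (G : ℕ → Set X) (_ : E ⊆ ⋃ n, G n)
    (_ : ∀ n, EMetric.diam (G n) ≤ ENNReal.ofReal δ),
    ∑' n, ENNReal.ofReal (ξ (EMetric.diam (G n)).toReal)

/-- A box in `ℝ^k`. -/
def IsBox {k : ℕ} (S : Set (EuclideanSpace ℝ (Fin k))) : Prop :=
  ∃ a b : Fin k → ℝ, S = {x | ∀ i, x i ∈ Set.Icc (a i) (b i)}

/-- A microscopic subset of `ℝ^k`. -/
def Microscopic {k : ℕ} (X : Set (EuclideanSpace ℝ (Fin k))) : Prop :=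
  ∀ ε : ℝ, 0 < ε → ∃ B : ℕ → Set (EuclideanSpace ℝ (Fin k)),
    (∀ n, IsBox (B n)) ∧ X ⊆ ⋃ n, B n ∧
    ∀ n, MeasureTheory.volume (B n) ≤ ENNReal.ofReal (ε ^ (n + 1))

/-- A microscopic subset of `ℝ`. -/
def MicroscopicR (E : Set ℝ) : Prop :=
  ∀ ε : ℝ, 0 < ε → ∃ I : ℕ → ℝ × ℝ,
    E ⊆ ⋃ n, Set.Icc (I n).1 (I n).2 ∧
    ∀ n, MeasureTheory.volume (Set.Icc (I n).1 (I n).2) ≤ ENNReal.ofReal (ε ^ (n + 1))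

end

/-!
For each scale `p` let `s = 1/(p+1)` and pick `w_p ≪ s` with `ψ(w_p) ≤ w_p^(d-1)/(p+1)^2`, which
the hypothesis on `ψ` allows. Composing a continuous function with the map that flattens every
cell of the grid `s ℤ^d`, except on ramps of width `w_p` along the walls, gives functions that
are constant on `w_p`-balls around every point at distance more than `2 w_p` from the grid
hyperplanes. Such functions are dense at arbitrarily fine scales, so a typical `f` lies, on the
`n`-th compact set, within `φ(w_p)/(n+1)` of one of them for some `p ≥ n`. At a point that is far
from the hyperplanes for infinitely many of these `p`, the oscillation ratio of `f` along `w_p`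
tends to `0`. Hence the points where `lip_φ f > 0` eventually lie in the `2 w_p`-neighbourhoods of
the hyperplanes; inside a ball these are covered by `O((p+1) w_p^(1-d))` sets of diameter `w_p`,
so their `ν_0^ψ` vanishes.
-/

open Metric

section CoveringNumbers

variable {X : Type*} [PseudoMetricSpace X]

lemma coverNum_mono {δ : ℝ} {E E' : Set X} (h : E ⊆ E') : coverNum δ E ≤ coverNum δ E' :=
  le_iInf₂ fun n ⟨F, hF, hE'⟩ => iInf₂_le n ⟨F, hF, h.trans hE'⟩

lemma coverNum_le_card_of_label {δ : ℝ} {E : Set X} {L : Type*} (lab : X → L) (s : Finset L)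
    (hs : ∀ x ∈ E, lab x ∈ s)
    (hfib : ∀ x ∈ E, ∀ y ∈ E, lab x = lab y → edist x y ≤ ENNReal.ofReal δ) :
    coverNum δ E ≤ s.card := by
  let F : Fin s.card → Set X := fun i => {x ∈ E | lab x = s.equivFin.symm i}
  refine iInf₂_le _ ⟨F, fun i => Metric.ediam_le fun x hx y hy => hfib x hx.1 y hy.1 ?_, ?_⟩
  · exact hx.2.trans hy.2.symm
  · intro x hx
    exact mem_iUnion.2 ⟨s.equivFin ⟨lab x, hs x hx⟩, hx, by simp⟩

lemma lowerBoxMeasure_eq_zero_of_subset_iUnion {ζ : ℝ → ℝ} {E : Set X} {ι : Type*}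
    [Countable ι] [Nonempty ι] {G : ι → Set X} (hE : E ⊆ ⋃ i, G i) (hG : ∀ i, nu0 ζ (G i) = 0) :
    lowerBoxMeasure ζ E = 0 := by
  obtain ⟨e, he⟩ := exists_surjective_nat ι
  refine le_antisymm ?_ zero_le
  calc lowerBoxMeasure ζ E ≤ ∑' m, nu0 ζ (G (e m)) := iInf₂_le _ (by rwa [he.iUnion_comp])
    _ = 0 := by simp [hG]

end CoveringNumbers

lemma liminf_eq_zero_of_frequently_le {α : Type*} {l : Filter α} {u : α → ℝ≥0∞} {r : ℕ → α}
    (hr : Tendsto r atTop l) {b : ℕ → ℝ≥0∞} (hb : Tendsto b atTop (𝓝 0))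
    (h : ∃ᶠ n in atTop, u (r n) ≤ b n) : liminf u l = 0 := by
  obtain ⟨e, he, hle⟩ := extraction_of_frequently_atTop h
  have hub : Tendsto (u ∘ r ∘ e) atTop (𝓝 0) :=
    tendsto_of_tendsto_of_tendsto_of_le_of_le tendsto_const_nhds (hb.comp he.tendsto_atTop)
      (fun _ => zero_le) hle
  exact le_antisymm
    ((hr.comp he.tendsto_atTop).liminf_le_liminf_comp.trans hub.liminf_eq.le) zero_le

lemma tendsto_ofReal_div_natCast_add_one (C : ℝ) :
    Tendsto (fun n : ℕ => ENNReal.ofReal (C / (n + 1))) atTop (𝓝 0) := by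
  simpa [div_eq_mul_inv] using
    ENNReal.tendsto_ofReal ((tendsto_one_div_add_atTop_nhds_zero_nat (𝕜 := ℝ)).const_mul C)

section FunctionSpace

variable {Y Z : Type*} [TopologicalSpace Y] [PseudoMetricSpace Z]

lemma ContinuousMap.hasBasis_nhds_dist (f : C(Y, Z)) :
    (𝓝 f).HasBasis (fun p : Set Y × ℝ => IsCompact p.1 ∧ 0 < p.2)
      fun p => {g | ∀ x ∈ p.1, dist (f x) (g x) < p.2} :=
  nhds_basis_uniformity' uniformity_basis_dist.compactConvergenceUniformity

lemma ContinuousMap.isOpen_setOf_forall_dist_lt (g : C(Y, Z)) {K : Set Y} (hK : IsCompact K)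
    {η : ℝ} (hη : 0 < η) : IsOpen {f : C(Y, Z) | ∀ x ∈ K, dist (f x) (g x) < η} := by
  have := isCompact_iff_compactSpace.1 hK
  have hpre : {f : C(Y, Z) | ∀ x ∈ K, dist (f x) (g x) < η} =
      (fun f : C(Y, Z) => f.restrict K) ⁻¹' ball (g.restrict K) η := by
    ext f
    simp [ContinuousMap.dist_lt_iff hη]
  rw [hpre]
  exact isOpen_ball.preimage (ContinuousMap.continuous_restrict K)

end FunctionSpace

lemma ContinuousMap.exists_extension_dist_lt {X : Type*} [MetricSpace X] {Ω : Set X}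
    (f : C(Ω, ℝ)) {K : Set Ω} (hK : IsCompact K) {ε : ℝ} (hε : 0 < ε) :
    ∃ F : C(X, ℝ), ∃ δ > 0, ∀ x ∈ K, ∀ y, dist (x : X) y < δ → dist (f x) (F y) < ε := by
  have := isCompact_iff_compactSpace.1 hK
  obtain ⟨F, hF⟩ := (f.restrict K).exists_extension
    ((continuous_subtype_val.comp continuous_subtype_val).isClosedEmbedding
      (Subtype.val_injective.comp Subtype.val_injective))
  obtain ⟨δ, hδ, hFδ⟩ := Metric.mem_uniformity_dist.1 <|
    (hK.image continuous_subtype_val).uniformContinuousAt_of_continuousAt F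
      (fun a _ => F.continuous.continuousAt) (dist_mem_uniformity hε)
  refine ⟨F, δ, hδ, fun x hx y hxy => ?_⟩
  have hFx : F x = f x := by simpa using DFunLike.congr_fun hF ⟨x, hx⟩
  simpa [hFx] using hFδ hxy (mem_image_of_mem _ hx)

section GridFlatten

variable {s w : ℝ}

/-- On each cell `[k s, (k + 1) s)` this is `k s`, except on the last stretch of length `w`, where
it climbs linearly to `(k + 1) s`. -/
noncomputable def gridFlatten (s w t : ℝ) : ℝ :=
  t + (s / w * max 0 (s * Int.fract (t / s) - (s - w)) - s * Int.fract (t / s))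

lemma continuous_gridFlatten (hw : 0 < w) (hws : w ≤ s) : Continuous (gridFlatten s w) := by
  let H : ℝ → ℝ := fun u => s / w * max 0 (s * u - (s - w)) - s * u
  have hH : H 0 = H 1 := by
    simp only [H, mul_zero, mul_one, zero_sub, sub_zero, sub_sub_cancel,
      max_eq_left (neg_nonpos.2 (sub_nonneg.2 hws)), max_eq_right hw.le]
    field_simp
    ring
  have hHc : Continuous H := by fun_prop
  exact continuous_id.add ((hHc.continuousOn.comp_fract'' hH).comp (continuous_id.div_const s))

lemma abs_gridFlatten_sub_le (hw : 0 < w) (hws : w ≤ s) (t : ℝ) :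
    |gridFlatten s w t - t| ≤ s := by
  have hu0 := Int.fract_nonneg (t / s)
  have hu1 := Int.fract_lt_one (t / s)
  have hmax : max 0 (s * Int.fract (t / s) - (s - w)) ≤ w :=
    max_le hw.le (by nlinarith [hw.le.trans hws])
  have hsw : 0 ≤ s / w := div_nonneg (hw.le.trans hws) hw.le
  have hramp : s / w * max 0 (s * Int.fract (t / s) - (s - w)) ≤ s := by
    calc s / w * max 0 (s * Int.fract (t / s) - (s - w)) ≤ s / w * w := by gcongr
      _ = s := div_mul_cancel₀ s hw.ne'
  have hramp0 : 0 ≤ s / w * max 0 (s * Int.fract (t / s) - (s - w)) :=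
    mul_nonneg hsw (le_max_left _ _)
  rw [gridFlatten, add_sub_cancel_left, abs_le]
  constructor <;> nlinarith

lemma gridFlatten_eq_of_mem_Icc (hw : 0 < w) {k : ℤ} {t : ℝ}
    (ht : t ∈ Set.Icc (k * s) ((k + 1) * s - w)) : gridFlatten s w t = k * s := by
  have hs : 0 < s := by nlinarith [ht.1, ht.2]
  have hfloor : ⌊t / s⌋ = k := by
    rw [Int.floor_eq_iff, le_div_iff₀ hs, div_lt_iff₀ hs]
    constructor <;> linarith [ht.1, ht.2]
  have hfract : s * Int.fract (t / s) = t - k * s := by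
    rw [Int.fract, hfloor]
    field_simp
  rw [gridFlatten, hfract, max_eq_left (by linarith [ht.2])]
  ring

lemma gridFlatten_eq_of_forall_lt_abs_sub (hw : 0 < w) (hws : w ≤ s) {t t' : ℝ}
    (ht : ∀ k : ℤ, 2 * w < |t - k * s|) (ht' : |t' - t| ≤ w) :
    gridFlatten s w t' = gridFlatten s w t := by
  have hs : 0 < s := hw.trans_le hws
  set k := ⌊t / s⌋
  have hk : k * s ≤ t := by simpa [le_div_iff₀ hs] using Int.floor_le (t / s)
  have hk1 : t < (k + 1) * s := by simpa [div_lt_iff₀ hs] using Int.lt_floor_add_one (t / s)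
  have hlo : k * s + 2 * w < t := by
    have := ht k
    rwa [abs_of_nonneg (by linarith), lt_sub_iff_add_lt'] at this
  have hhi : t < (k + 1) * s - 2 * w := by
    have := ht (k + 1)
    push_cast at this
    rw [abs_of_nonpos (by linarith)] at this
    linarith
  have ht'' := abs_le.1 ht'
  rw [gridFlatten_eq_of_mem_Icc hw ⟨by linarith, by linarith⟩,
    gridFlatten_eq_of_mem_Icc hw ⟨by linarith, by linarith⟩]

end GridFlatten

section Euclidean

variable {d : ℕ}

lemma EuclideanSpace.dist_le_sqrt_mul_of_forall {x y : EuclideanSpace ℝ (Fin d)} {c : ℝ}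
    (hc : 0 ≤ c) (h : ∀ i, dist (x i) (y i) ≤ c) : dist x y ≤ √d * c := by
  rw [EuclideanSpace.dist_eq, ← Real.sqrt_sq hc, ← Real.sqrt_mul (Nat.cast_nonneg d)]
  refine Real.sqrt_le_sqrt ?_
  calc ∑ i, dist (x i) (y i) ^ 2 ≤ ∑ _i : Fin d, c ^ 2 :=
        Finset.sum_le_sum fun i _ => pow_le_pow_left₀ dist_nonneg (h i) 2
    _ = d * c ^ 2 := by simp

variable {s w : ℝ}

noncomputable def gridFlattenEuc (s w : ℝ) (x : EuclideanSpace ℝ (Fin d)) :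
    EuclideanSpace ℝ (Fin d) :=
  WithLp.toLp 2 fun i => gridFlatten s w (x i)

def gridNbhd (s w : ℝ) : Set (EuclideanSpace ℝ (Fin d)) :=
  {x | ∃ i, ∃ k : ℤ, |x i - k * s| ≤ 2 * w}

lemma continuous_gridFlattenEuc (hw : 0 < w) (hws : w ≤ s) :
    Continuous (gridFlattenEuc (d := d) s w) :=
  (PiLp.continuous_toLp 2 _).comp <|
    continuous_pi fun i => (continuous_gridFlatten hw hws).comp (PiLp.continuous_apply 2 _ i)

lemma dist_gridFlattenEuc_le (hw : 0 < w) (hws : w ≤ s) (x : EuclideanSpace ℝ (Fin d)) :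
    dist (gridFlattenEuc s w x) x ≤ √d * s :=
  EuclideanSpace.dist_le_sqrt_mul_of_forall (hw.le.trans hws) fun i =>
    abs_gridFlatten_sub_le hw hws (x i)

lemma gridFlattenEuc_eq_of_notMem_gridNbhd (hw : 0 < w) (hws : w ≤ s)
    {x y : EuclideanSpace ℝ (Fin d)} (hx : x ∉ gridNbhd s w) (hy : dist y x ≤ w) :
    gridFlattenEuc s w y = gridFlattenEuc s w x := by
  ext i
  exact gridFlatten_eq_of_forall_lt_abs_sub hw hws (fun k => not_le.1 fun h => hx ⟨i, k, h⟩)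
    ((PiLp.dist_apply_le y x i).trans hy)

end Euclidean

lemma card_Icc_floor_le {a b : ℝ} (h : a ≤ b) :
    ((Finset.Icc ⌊a⌋ ⌊b⌋).card : ℝ) ≤ b - a + 2 := by
  have hcard := Int.card_Icc_of_le (a := ⌊a⌋) (b := ⌊b⌋) (by linarith [Int.floor_mono h])
  have : ((Finset.Icc ⌊a⌋ ⌊b⌋).card : ℝ) = ⌊b⌋ + 1 - ⌊a⌋ := by exact_mod_cast hcard
  linarith [Int.floor_le b, Int.lt_floor_add_one a]

lemma floor_div_mem_Icc {a b t ℓ : ℝ} (hℓ : 0 < ℓ) (ht : t ∈ Set.Icc a b) :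
    ⌊t / ℓ⌋ ∈ Finset.Icc ⌊a / ℓ⌋ ⌊b / ℓ⌋ :=
  Finset.mem_Icc.2 ⟨Int.floor_mono (div_le_div_of_nonneg_right ht.1 hℓ.le),
    Int.floor_mono (div_le_div_of_nonneg_right ht.2 hℓ.le)⟩

lemma abs_sub_lt_of_floor_div_eq {a b ℓ : ℝ} (hℓ : 0 < ℓ) (h : ⌊a / ℓ⌋ = ⌊b / ℓ⌋) :
    |a - b| < ℓ := by
  have := Int.abs_sub_lt_one_of_floor_eq_floor h
  rwa [← sub_div, abs_div, abs_of_pos hℓ, div_lt_one hℓ] at this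

lemma card_biUnion_piFinset_ite_le {ι α : Type*} [Fintype ι] [DecidableEq ι] [DecidableEq α]
    (A B : Finset α) :
    (Finset.univ.biUnion fun i : ι => Fintype.piFinset fun j => if j = i then A else B).card ≤
      Fintype.card ι * (A.card * B.card ^ (Fintype.card ι - 1)) := by
  refine Finset.card_biUnion_le.trans (le_of_eq ?_)
  simp [Fintype.card_piFinset, apply_ite, Finset.prod_ite, Finset.filter_ne', Finset.filter_eq',
    Finset.card_erase_of_mem]

lemma card_biUnion_Icc_floor_le (K : Finset ℤ) {s a ℓ : ℝ} (ha : 0 ≤ a) (hℓ : 0 < ℓ) :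
    ((K.biUnion fun k : ℤ => Finset.Icc ⌊(k * s - a) / ℓ⌋ ⌊(k * s + a) / ℓ⌋).card : ℝ) ≤
      K.card * (2 * a / ℓ + 2) := by
  calc _ ≤ ∑ k ∈ K, ((Finset.Icc ⌊(k * s - a) / ℓ⌋ ⌊(k * s + a) / ℓ⌋).card : ℝ) := by
        exact_mod_cast Finset.card_biUnion_le
    _ ≤ ∑ _k ∈ K, (2 * a / ℓ + 2) := Finset.sum_le_sum fun k _ =>
        (card_Icc_floor_le (by gcongr; linarith)).trans_eq (by ring)
    _ = K.card * (2 * a / ℓ + 2) := by rw [Finset.sum_const, nsmul_eq_mul]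

section Counting

variable {d : ℕ}

lemma EuclideanSpace.coverNum_le_card_of_floor_div_mem {ℓ : ℝ} (hℓ : 0 < ℓ)
    {E : Set (EuclideanSpace ℝ (Fin d))} (F : Finset (Fin d → ℤ))
    (hF : ∀ x ∈ E, (fun j => ⌊x j / ℓ⌋) ∈ F) : coverNum (√d * ℓ) E ≤ F.card := by
  refine coverNum_le_card_of_label _ F hF fun x _ y _ hxy => ?_
  rw [edist_dist]
  exact ENNReal.ofReal_le_ofReal <| EuclideanSpace.dist_le_sqrt_mul_of_forall hℓ.le fun j =>
    (abs_sub_lt_of_floor_div_eq hℓ (congrFun hxy j)).le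

lemma coverNum_closedBall_inter_gridNbhd_le (hd : 0 < d) {R s w : ℝ} (hR : 0 ≤ R) (hs : 0 < s)
    (hw : 0 < w) :
    coverNum w (closedBall (0 : EuclideanSpace ℝ (Fin d)) R ∩ gridNbhd s w) ≤
      ENNReal.ofReal (d * ((2 * ((R + 2 * w) / s) + 2) * (4 * √d + 2) *
        (2 * R * √d / w + 2) ^ (d - 1))) := by
  classical
  have hsd : 0 < √(d : ℝ) := Real.sqrt_pos.2 (by exact_mod_cast hd)
  set ℓ := w / √d with hℓ_def
  have hℓ : 0 < ℓ := div_pos hw hsd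
  set c := (R + 2 * w) / s
  -- Grid cells of side `ℓ` have diameter `w`. A point of the ball in a slab `|x i - k s| ≤ 2 w`
  -- has `|k| ≤ c`, its cell index lies in `A` in coordinate `i` and in `B` in the others.
  let K : Finset ℤ := Finset.Icc ⌊-c⌋ ⌊c⌋
  let A : Finset ℤ := K.biUnion fun k => Finset.Icc ⌊(k * s - 2 * w) / ℓ⌋ ⌊(k * s + 2 * w) / ℓ⌋
  let B : Finset ℤ := Finset.Icc ⌊-R / ℓ⌋ ⌊R / ℓ⌋
  let F := Finset.univ.biUnion fun i : Fin d => Fintype.piFinset fun j => if j = i then A else B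
  have hcover : coverNum w (closedBall (0 : EuclideanSpace ℝ (Fin d)) R ∩ gridNbhd s w) ≤
      F.card := by
    convert EuclideanSpace.coverNum_le_card_of_floor_div_mem hℓ F ?_ using 2
    · exact (mul_div_cancel₀ w hsd.ne').symm
    rintro x ⟨hxR, i, k, hik⟩
    have hcoord : ∀ j, x j ∈ Set.Icc (-R) R := fun j =>
      abs_le.1 ((PiLp.norm_apply_le x j).trans (mem_closedBall_zero_iff.1 hxR))
    have hik' := abs_le.1 hik
    have hk : k ∈ K := by
      have := floor_div_mem_Icc hs (t := k * s) (a := -(R + 2 * w)) (b := R + 2 * w)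
        ⟨by linarith [(hcoord i).1], by linarith [(hcoord i).2]⟩
      rwa [mul_div_cancel_right₀ _ hs.ne', Int.floor_intCast, neg_div] at this
    refine Finset.mem_biUnion.2 ⟨i, Finset.mem_univ _, Fintype.mem_piFinset.2 fun j => ?_⟩
    split_ifs with hji
    · subst hji
      exact Finset.mem_biUnion.2
        ⟨k, hk, floor_div_mem_Icc hℓ ⟨by linarith [hik'.1], by linarith [hik'.2]⟩⟩
    · exact floor_div_mem_Icc hℓ (hcoord j)
  have hA : (A.card : ℝ) ≤ (2 * c + 2) * (4 * √d + 2) := by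
    refine (card_biUnion_Icc_floor_le K (by positivity) hℓ).trans ?_
    rw [hℓ_def, show 2 * (2 * w) / (w / √d) = 4 * √d by field_simp; ring]
    gcongr
    linarith [card_Icc_floor_le (neg_le_self (by positivity : 0 ≤ c))]
  have hB : (B.card : ℝ) ≤ 2 * R * √d / w + 2 := by
    refine (card_Icc_floor_le (by gcongr; linarith)).trans_eq ?_
    rw [hℓ_def]
    field_simp
    ring
  refine hcover.trans ?_
  rw [← ENNReal.ofReal_natCast]
  refine ENNReal.ofReal_le_ofReal ?_
  calc _ ≤ ((d * (A.card * B.card ^ (d - 1)) : ℕ) : ℝ) := by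
        exact_mod_cast (card_biUnion_piFinset_ite_le A B).trans_eq (by rw [Fintype.card_fin])
    _ ≤ _ := by
        push_cast
        gcongr

lemma exists_coverNum_closedBall_inter_gridNbhd_le (hd : 0 < d) {R : ℝ} (hR : 0 ≤ R) :
    ∃ C : ℝ, 0 ≤ C ∧ ∀ s w : ℝ, 0 < w → w ≤ 1 → 0 < s → s ≤ 1 →
      coverNum w (closedBall (0 : EuclideanSpace ℝ (Fin d)) R ∩ gridNbhd s w) ≤
        ENNReal.ofReal (C / (s * w ^ (d - 1))) := by
  refine ⟨d * (2 * R + 6) * (4 * √d + 2) * (2 * R * √d + 2) ^ (d - 1), by positivity, ?_⟩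
  intro s w hw hw1 hs hs1
  refine (coverNum_closedBall_inter_gridNbhd_le hd hR hs hw).trans (ENNReal.ofReal_le_ofReal ?_)
  have hK : 2 * ((R + 2 * w) / s) + 2 ≤ (2 * R + 6) / s := by
    rw [le_div_iff₀ hs]
    field_simp
    nlinarith
  have hB : 2 * R * √d / w + 2 ≤ (2 * R * √d + 2) / w := by
    rw [add_div]
    gcongr
    rw [le_div_iff₀ hw]
    linarith
  calc _ ≤ d * ((2 * R + 6) / s * (4 * √d + 2) * ((2 * R * √d + 2) / w) ^ (d - 1)) := by
        gcongr
    _ = _ := by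
        rw [div_pow]
        field_simp

end Counting

lemma ediam_image_le_of_forall_dist_lt {X : Type*} {S : Set X} {f g : X → ℝ} {c η : ℝ}
    (hg : ∀ y ∈ S, g y = c) (hfg : ∀ y ∈ S, dist (f y) (g y) < η) :
    Metric.ediam (f '' S) ≤ ENNReal.ofReal (2 * η) := by
  refine Metric.ediam_le ?_
  rintro _ ⟨a, ha, rfl⟩ _ ⟨b, hb, rfl⟩
  rw [edist_dist]
  refine ENNReal.ofReal_le_ofReal ?_
  have hb' := hfg b hb
  rw [hg b hb, dist_comm] at hb'
  have := dist_triangle (f a) c (f b)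
  linarith [hg a ha ▸ hfg a ha]

def IsFlatOff {X Y : Type*} [PseudoMetricSpace X] (B : Set X) (r : ℝ) (g : X → Y) : Prop :=
  ∀ x ∉ B, ∀ y ∈ closedBall x r, g y = g x

section Typical

variable {d : ℕ}

lemma tendsto_nhdsGT_of_le_one_div {w : ℕ → ℝ} (hw : ∀ p, 0 < w p ∧ w p ≤ 1 / (p + 1)) :
    Tendsto w atTop (𝓝[>] 0) :=
  tendsto_nhdsWithin_iff.2 ⟨squeeze_zero (fun p => (hw p).1.le) (fun p => (hw p).2)
    tendsto_one_div_add_atTop_nhds_zero_nat, Eventually.of_forall fun p => (hw p).1⟩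

lemma exists_scale_seq_of_frequently_lt {ψ : ℝ → ℝ}
    (hψ : ∀ ε : ℝ, 0 < ε → ∃ᶠ r in 𝓝[>] (0:ℝ), ψ r / r ^ (d - 1) < ε) :
    ∃ w : ℕ → ℝ, (∀ p, 0 < w p ∧ w p ≤ 1 / (p + 1)) ∧
      ∀ p, ψ (w p) ≤ w p ^ (d - 1) / (p + 1) ^ 2 := by
  have : ∀ p : ℕ, ∃ r : ℝ, (0 < r ∧ r ≤ 1 / (p + 1)) ∧ ψ r ≤ r ^ (d - 1) / (p + 1) ^ 2 := by
    intro p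
    obtain ⟨r, hψr, hr⟩ := ((hψ (1 / (p + 1) ^ 2) (by positivity)).and_eventually
      (Ioo_mem_nhdsGT (by positivity : (0 : ℝ) < 1 / (p + 1)))).exists
    refine ⟨r, ⟨hr.1, hr.2.le⟩, ?_⟩
    rw [div_lt_iff₀ (pow_pos hr.1 _)] at hψr
    exact (hψr.trans_eq (by ring)).le
  choose w hw hψw using this
  exact ⟨w, hw, hψw⟩

lemma dense_setOf_exists_isFlatOff {Ω : Set (EuclideanSpace ℝ (Fin d))} {w : ℕ → ℝ}
    (hw : ∀ p, 0 < w p ∧ w p ≤ 1 / (p + 1)) (n : ℕ) :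
    Dense {h : C(Ω, ℝ) | ∃ p : ℕ, p ≥ n ∧
      IsFlatOff (Subtype.val ⁻¹' gridNbhd (1 / (p + 1)) (w p)) (w p) h} := by
  intro f
  refine (mem_closure_iff_nhds_basis f.hasBasis_nhds_dist).2 ?_
  rintro ⟨K, ε⟩ ⟨hK, hε⟩
  obtain ⟨F, δ, hδ, hF⟩ := f.exists_extension_dist_lt hK hε
  have hsmall : ∀ᶠ p : ℕ in atTop, √d * (1 / (p + 1)) < δ := by
    refine (tendsto_one_div_add_atTop_nhds_zero_nat.const_mul √d).eventually (gt_mem_nhds ?_)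
    simpa using hδ
  obtain ⟨p, hpδ, hpn⟩ := (hsmall.and (eventually_ge_atTop n)).exists
  obtain ⟨hw0, hw1⟩ := hw p
  have hT := continuous_gridFlattenEuc (d := d) hw0 hw1
  refine ⟨⟨fun x => F (gridFlattenEuc (1 / (p + 1)) (w p) x),
    (F.continuous.comp hT).comp continuous_subtype_val⟩, ⟨p, hpn, ?_⟩, fun x hx => hF x hx _ ?_⟩
  · exact fun x hx y hy => congrArg F (gridFlattenEuc_eq_of_notMem_gridNbhd hw0 hw1 hx hy)
  · rw [dist_comm]
    exact (dist_gridFlattenEuc_le hw0 hw1 _).trans_lt hpδ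

lemma eventually_residual_exists_isFlatOff_near {Ω : Set (EuclideanSpace ℝ (Fin d))}
    (K : CompactExhaustion Ω) {φ : ℝ → ℝ} (hφ : ∀ r, 0 < r → 0 < φ r) {w : ℕ → ℝ}
    (hw : ∀ p, 0 < w p ∧ w p ≤ 1 / (p + 1)) :
    ∀ᶠ f in residual C(Ω, ℝ), ∀ n : ℕ, ∃ p : ℕ, p ≥ n ∧ ∃ g : C(Ω, ℝ),
      IsFlatOff (Subtype.val ⁻¹' gridNbhd (1 / (p + 1)) (w p)) (w p) g ∧
      ∀ x ∈ K n, dist (f x) (g x) < φ (w p) / (n + 1) := by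
  refine eventually_countable_forall.2 fun n =>
    residual_of_dense_open ?_ ((dense_setOf_exists_isFlatOff hw n).mono ?_)
  · refine isOpen_iff_forall_mem_open.2 fun f ⟨p, hp, g, hg, hfg⟩ =>
      ⟨_, fun f' hf' => ⟨p, hp, g, hg, hf'⟩, ?_, hfg⟩
    exact g.isOpen_setOf_forall_dist_lt (K.isCompact n) (div_pos (hφ _ (hw p).1) n.cast_add_one_pos)
  · rintro h ⟨p, hp, hh⟩
    exact ⟨p, hp, h, hh, fun x _ => by simpa using div_pos (hφ _ (hw p).1) n.cast_add_one_pos⟩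

lemma lipGauge_eq_zero_of_frequently_isFlatOff {X : Type*} [PseudoMetricSpace X]
    (K : CompactExhaustion X) {φ : ℝ → ℝ} {r : ℕ → ℝ} (hr : Tendsto r atTop (𝓝[>] 0)) {B : ℕ → Set X} {f : X → ℝ} {g : ℕ → X → ℝ}
    (hg : ∀ n, IsFlatOff (B n) (r n) (g n))
    (hfg : ∀ n, ∀ y ∈ K n, dist (f y) (g n y) < φ (r n) / (n + 1))
    {x : X} (hx : ∃ᶠ n in atTop, x ∉ B n) : lipGauge φ f x = 0 := by
  obtain ⟨k, hk⟩ := K.exists_mem_nhds x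
  obtain ⟨ρ, hρ, hρk⟩ := nhds_basis_closedBall.mem_iff.1 hk
  have hsmall : ∀ᶠ n in atTop, k ≤ n ∧ r n ≤ ρ := (eventually_ge_atTop k).and
    ((tendsto_nhds_of_tendsto_nhdsWithin hr).eventually (ge_mem_nhds hρ))
  refine liminf_eq_zero_of_frequently_le hr (tendsto_ofReal_div_natCast_add_one 2)
    ((hx.and_eventually hsmall).mono ?_)
  rintro n ⟨hxB, hkn, hrρ⟩
  have hball : closedBall x (r n) ⊆ K n :=
    (closedBall_subset_closedBall hrρ).trans (hρk.trans (K.subset hkn))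
  refine ENNReal.div_le_of_le_mul ?_
  calc Metric.ediam (f '' closedBall x (r n)) ≤ ENNReal.ofReal (2 * (φ (r n) / (n + 1))) :=
        ediam_image_le_of_forall_dist_lt (hg n x hxB) fun y hy => hfg n y (hball hy)
    _ = ENNReal.ofReal (2 / (n + 1)) * ENNReal.ofReal (φ (r n)) := by
        rw [← ENNReal.ofReal_mul (by positivity)]
        ring_nf

lemma nu0_eq_zero_of_frequently_subset_gridNbhd (hd : 0 < d) {ψ : ℝ → ℝ} {w : ℕ → ℝ}
    (hw : ∀ p, 0 < w p ∧ w p ≤ 1 / (p + 1)) (hψ : ∀ p, ψ (w p) ≤ w p ^ (d - 1) / (p + 1) ^ 2)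
    {T : Set (EuclideanSpace ℝ (Fin d))} {R : ℝ} (hR : 0 ≤ R) (hTR : T ⊆ closedBall 0 R)
    (hT : ∃ᶠ p : ℕ in atTop, T ⊆ gridNbhd (1 / (p + 1)) (w p)) : nu0 ψ T = 0 := by
  obtain ⟨C, hC, hcov⟩ := exists_coverNum_closedBall_inter_gridNbhd_le hd hR
  refine liminf_eq_zero_of_frequently_le (tendsto_nhdsGT_of_le_one_div hw)
    (tendsto_ofReal_div_natCast_add_one C) (hT.mono fun p hp => ?_)
  obtain ⟨hw0, hw1⟩ := hw p
  have hs1 : 1 / ((p : ℝ) + 1) ≤ 1 := by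
    rw [div_le_one p.cast_add_one_pos]
    linarith [p.cast_nonneg (α := ℝ)]
  have hN := (coverNum_mono (subset_inter hTR hp)).trans
    (hcov _ _ hw0 (hw1.trans hs1) (by positivity) hs1)
  calc coverNum (w p) T * ENNReal.ofReal (ψ (w p))
      ≤ ENNReal.ofReal (C / (1 / (p + 1) * w p ^ (d - 1))) * ENNReal.ofReal (ψ (w p)) := by
        gcongr
    _ = ENNReal.ofReal (C / (1 / (p + 1) * w p ^ (d - 1)) * ψ (w p)) :=
        (ENNReal.ofReal_mul (by positivity)).symm
    _ ≤ ENNReal.ofReal (C / (p + 1)) := by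
        refine ENNReal.ofReal_le_ofReal ?_
        calc C / (1 / (p + 1) * w p ^ (d - 1)) * ψ (w p)
            ≤ C / (1 / (p + 1) * w p ^ (d - 1)) * (w p ^ (d - 1) / (p + 1) ^ 2) := by
              gcongr
              exact hψ p
          _ = C / (p + 1) := by
              field_simp

end Typical

theorem stmt0_general
    (d : ℕ) (hd : 0 < d) (Ω : Set (EuclideanSpace ℝ (Fin d)))
    (hΩ : LocallyCompactSpace Ω)
    (φ ψ : ℝ → ℝ) (hφ : IsGauge φ)
    (hψd : ∀ ε : ℝ, 0 < ε → ∃ᶠ r in 𝓝[>] (0:ℝ), ψ r / r ^ (d - 1) < ε) :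
    ∀ᶠ f : C(↥Ω, ℝ) in residual C(↥Ω, ℝ),
      lowerBoxMeasure ψ
        {x : EuclideanSpace ℝ (Fin d) | ∃ hx : x ∈ Ω, 0 < lipGauge φ (⇑f) ⟨x, hx⟩} = 0 := by
  have := hΩ
  obtain ⟨w, hw, hψw⟩ := exists_scale_seq_of_frequently_lt hψd
  let K := CompactExhaustion.choice Ω
  filter_upwards [eventually_residual_exists_isFlatOff_near K hφ.2.2.2 hw] with f hf
  choose p hp g hg hfg using hf
  have hq : Tendsto p atTop atTop := tendsto_atTop_mono hp tendsto_id
  refine lowerBoxMeasure_eq_zero_of_subset_iUnion (G := fun NM : ℕ × ℕ =>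
    Metric.closedBall 0 NM.2 ∩ ⋂ n ≥ NM.1, gridNbhd (1 / ((p n : ℝ) + 1)) (w (p n))) ?_
    fun NM => ?_
  · rintro x ⟨hxΩ, hlip⟩
    have hbad : ∀ᶠ n in atTop, x ∈ gridNbhd (1 / ((p n : ℝ) + 1)) (w (p n)) := by
      by_contra hgood
      exact hlip.ne' (lipGauge_eq_zero_of_frequently_isFlatOff K
        ((tendsto_nhdsGT_of_le_one_div hw).comp hq) hg hfg (x := ⟨x, hxΩ⟩)
        (not_eventually.1 hgood))
    obtain ⟨N, hN⟩ := eventually_atTop.1 hbad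
    exact mem_iUnion.2 ⟨(N, ⌈‖x‖⌉₊), mem_closedBall_zero_iff.2 (Nat.le_ceil _), mem_iInter₂.2 hN⟩
  · exact nu0_eq_zero_of_frequently_subset_gridNbhd hd hw hψw (Nat.cast_nonneg _)
      inter_subset_left (hq.frequently (eventually_atTop.2 ⟨NM.1, fun n hn =>
        inter_subset_right.trans (biInter_subset_of_mem hn)⟩).frequently)

theorem stmt0
    (d : ℕ) (hd : 0 < d) (Ω : Set (EuclideanSpace ℝ (Fin d)))
    (hΩ : LocallyCompactSpace Ω)
    (φ ψ : ℝ → ℝ) (hφ : IsGauge φ) (hψ : IsGauge ψ)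
    (hψd : ∀ ε : ℝ, 0 < ε → ∃ᶠ r in 𝓝[>] (0:ℝ), ψ r / r ^ (d - 1) < ε) :
    ∀ᶠ f : C(↥Ω, ℝ) in residual C(↥Ω, ℝ),
      lowerBoxMeasure ψ
        {x : EuclideanSpace ℝ (Fin d) | ∃ hx : x ∈ Ω, 0 < lipGauge φ (⇑f) ⟨x, hx⟩} = 0 :=
  stmt0_general d hd Ω hΩ φ ψ hφ hψd
end

section
/- If E ⊆ ℝ^d is microscopic and F ⊆ ℝ^m is microscopic, then the cross product E ⋈ F = (E × ℝ^m) ∪ (ℝ^d × F) ⊆ ℝ^{d+m} is microscopic. -/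
open Filter Set Topology MeasureTheory
open scoped ENNReal NNReal

/-!
`E ⋈ F` is the union of the two cylinders over `E` and over `F`, and a cylinder
`{x | x ∘ σ ∈ E}` is the countable union over `R ∈ ℕ` of its slices `E × [-R, R]^(k-d)`.
Extending each box of a cover of `E` by the cube `[-R, R]^(k-d)` multiplies its volume by a
constant `c`, which is absorbed by covering `E` at scale `ε / max 1 c`. Microscopic sets are closed
under countable unions: cover the `j`-th set at scale `ε ^ 2 ^ (j + 1)` and place its `n`-th box
at position `2 ^ j * (2 * n + 1) - 1 < 2 ^ (j + 1) * (n + 1)`.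
-/

open Function

/-- The inverse of the bijection `(j, n) ↦ 2 ^ j * (2 * n + 1) - 1` from `ℕ × ℕ` to `ℕ`. -/
def twoAdicUnpair (i : ℕ) : ℕ × ℕ :=
  ((i + 1).factorization 2, ordCompl[2] (i + 1) / 2)

lemma succ_le_twoAdicUnpair (i : ℕ) :
    i + 1 ≤ 2 ^ ((twoAdicUnpair i).1 + 1) * ((twoAdicUnpair i).2 + 1) := by
  have hodd : Odd (ordCompl[2] (i + 1)) :=
    Nat.odd_iff.2 (by have := Nat.not_dvd_ordCompl Nat.prime_two (n := i + 1) (by omega); omega)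
  calc i + 1 = 2 ^ (twoAdicUnpair i).1 * (2 * (twoAdicUnpair i).2 + 1) := by
        rw [twoAdicUnpair, Nat.two_mul_div_two_add_one_of_odd hodd,
          Nat.ordProj_mul_ordCompl_eq_self]
    _ ≤ 2 ^ (twoAdicUnpair i).1 * (2 * ((twoAdicUnpair i).2 + 1)) := by gcongr; omega
    _ = 2 ^ ((twoAdicUnpair i).1 + 1) * ((twoAdicUnpair i).2 + 1) := by ring

lemma twoAdicUnpair_surjective : Surjective twoAdicUnpair := by
  rintro ⟨j, n⟩
  have hfac : (2 ^ j * (2 * n + 1)).factorization 2 = j := by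
    rw [Nat.factorization_mul (by positivity) (by omega), Nat.Prime.factorization_pow Nat.prime_two,
      Finsupp.add_apply, Nat.factorization_eq_zero_of_not_dvd (by omega)]
    simp
  refine ⟨2 ^ j * (2 * n + 1) - 1, ?_⟩
  rw [twoAdicUnpair, Nat.sub_add_cancel (by positivity : 0 < 2 ^ j * (2 * n + 1)), hfac,
    Nat.mul_div_cancel_left _ (by positivity)]
  simp only [Prod.mk.injEq, true_and]
  omega

section Boxes

variable {k : ℕ}

def euclideanBox (a b : Fin k → ℝ) : Set (EuclideanSpace ℝ (Fin k)) :=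
  {x | ∀ i, x i ∈ Icc (a i) (b i)}

lemma isBox_euclideanBox (a b : Fin k → ℝ) : IsBox (euclideanBox a b) := ⟨a, b, rfl⟩

lemma volume_euclideanBox (a b : Fin k → ℝ) :
    volume (euclideanBox a b) = ∏ i, ENNReal.ofReal (b i - a i) := by
  have hmp := EuclideanSpace.volume_preserving_symm_measurableEquiv_toLp (Fin k)
  have hset : euclideanBox a b =
      (MeasurableEquiv.toLp 2 (Fin k → ℝ)).symm ⁻¹' univ.pi fun i => Icc (a i) (b i) := by
    ext x
    simp only [euclideanBox, mem_setOf_eq, mem_preimage, mem_univ_pi]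
    rfl
  rw [hset, hmp.measure_preimage (MeasurableSet.univ_pi fun i => measurableSet_Icc).nullMeasurableSet,
    volume_pi_pi]
  simp [Real.volume_Icc]

lemma volume_euclideanBox_extend {d : ℕ} (σ : Fin d ↪ Fin k) (a b : Fin d → ℝ) (r s : ℝ) :
    volume (euclideanBox (extend σ a fun _ => r) (extend σ b fun _ => s)) =
      volume (euclideanBox a b) * ENNReal.ofReal (s - r) ^ (k - d) := by
  have hcompl : ∀ t ∈ (Finset.univ.map σ)ᶜ,
      ENNReal.ofReal (extend σ b (fun _ => s) t - extend σ a (fun _ => r) t) =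
        ENNReal.ofReal (s - r) := by
    intro t ht
    have ht' : ¬∃ i, σ i = t := by simpa using ht
    rw [extend_apply' _ _ _ ht', extend_apply' _ _ _ ht']
  rw [volume_euclideanBox, volume_euclideanBox, ← Finset.prod_mul_prod_compl (Finset.univ.map σ),
    Finset.prod_map, Finset.prod_congr rfl hcompl, Finset.prod_const, Finset.card_compl,
    Finset.card_map, Finset.card_univ, Fintype.card_fin, Fintype.card_fin]
  simp only [σ.injective.extend_apply]

end Boxes

lemma pow_succ_div_mul_le {ε M : ℝ} (hε : 0 ≤ ε) (hM : 1 ≤ M) (n : ℕ) :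
    (ε / M) ^ (n + 1) * M ≤ ε ^ (n + 1) := by
  rw [pow_succ, mul_assoc, div_mul_cancel₀ ε (by positivity), pow_succ]
  gcongr
  exact div_le_self hε hM

namespace Microscopic

variable {k : ℕ} {X Y : Set (EuclideanSpace ℝ (Fin k))}

lemma mono (hXY : X ⊆ Y) (hY : Microscopic Y) : Microscopic X := fun ε hε =>
  let ⟨B, hbox, hcov, hvol⟩ := hY ε hε
  ⟨B, hbox, hXY.trans hcov, hvol⟩

lemma of_forall_lt_one
    (h : ∀ ε : ℝ, 0 < ε → ε < 1 → ∃ B : ℕ → Set (EuclideanSpace ℝ (Fin k)),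
      (∀ n, IsBox (B n)) ∧ X ⊆ ⋃ n, B n ∧ ∀ n, volume (B n) ≤ ENNReal.ofReal (ε ^ (n + 1))) :
    Microscopic X := by
  intro ε hε
  obtain ⟨B, hbox, hcov, hvol⟩ := h (min ε 2⁻¹) (by positivity) (by norm_num)
  exact ⟨B, hbox, hcov, fun n => (hvol n).trans (ENNReal.ofReal_le_ofReal
    (pow_le_pow_left₀ (by positivity) (min_le_left _ _) _))⟩

lemma of_volume_le_mul {c : ℝ≥0∞} (hc : c ≠ ∞)
    (h : ∀ η : ℝ, 0 < η → ∃ B : ℕ → Set (EuclideanSpace ℝ (Fin k)),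
      (∀ n, IsBox (B n)) ∧ X ⊆ ⋃ n, B n ∧ ∀ n, volume (B n) ≤ ENNReal.ofReal (η ^ (n + 1)) * c) :
    Microscopic X := by
  intro ε hε
  set M := max 1 c.toReal
  have hM : 1 ≤ M := le_max_left _ _
  obtain ⟨B, hbox, hcov, hvol⟩ := h (ε / M) (by positivity)
  refine ⟨B, hbox, hcov, fun n => (hvol n).trans ?_⟩
  calc ENNReal.ofReal ((ε / M) ^ (n + 1)) * c
      ≤ ENNReal.ofReal ((ε / M) ^ (n + 1)) * ENNReal.ofReal M := by
        gcongr
        exact ENNReal.le_ofReal_iff_toReal_le hc (by positivity) |>.2 (le_max_right _ _)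
    _ = ENNReal.ofReal ((ε / M) ^ (n + 1) * M) := (ENNReal.ofReal_mul (by positivity)).symm
    _ ≤ ENNReal.ofReal (ε ^ (n + 1)) := ENNReal.ofReal_le_ofReal (pow_succ_div_mul_le hε.le hM n)

lemma iUnion {A : ℕ → Set (EuclideanSpace ℝ (Fin k))} (hA : ∀ j, Microscopic (A j)) :
    Microscopic (⋃ j, A j) := by
  refine of_forall_lt_one fun ε hε hε1 => ?_
  choose B hbox hcov hvol using fun j => hA j (ε ^ 2 ^ (j + 1)) (by positivity)
  refine ⟨fun i => B (twoAdicUnpair i).1 (twoAdicUnpair i).2, fun i => hbox _ _, ?_, fun i => ?_⟩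
  · intro x hx
    obtain ⟨j, hj⟩ := mem_iUnion.1 hx
    obtain ⟨n, hn⟩ := mem_iUnion.1 (hcov j hj)
    obtain ⟨i, hi⟩ := twoAdicUnpair_surjective (j, n)
    exact mem_iUnion.2 ⟨i, by rwa [hi]⟩
  · refine (hvol _ _).trans (ENNReal.ofReal_le_ofReal ?_)
    rw [← pow_mul]
    exact pow_le_pow_of_le_one hε.le hε1.le (succ_le_twoAdicUnpair i)

lemma union (hX : Microscopic X) (hY : Microscopic Y) : Microscopic (X ∪ Y) := by
  have hcover : X ∪ Y ⊆ ⋃ j : ℕ, if j = 0 then X else Y := by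
    rintro x (hx | hx)
    · exact mem_iUnion.2 ⟨0, by simpa using hx⟩
    · exact mem_iUnion.2 ⟨1, by simpa using hx⟩
  refine (iUnion fun j => ?_).mono hcover
  split_ifs
  exacts [hX, hY]

variable {d : ℕ} {E : Set (EuclideanSpace ℝ (Fin d))}

lemma preimage_inter_cube (σ : Fin d ↪ Fin k) (R : ℝ) (hE : Microscopic E) :
    Microscopic {x : EuclideanSpace ℝ (Fin k) |
      WithLp.toLp 2 (fun i => x (σ i)) ∈ E ∧ ∀ t, |x t| ≤ R} := by
  refine of_volume_le_mul (c := ENNReal.ofReal (2 * R) ^ (k - d))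
    (ENNReal.pow_ne_top ENNReal.ofReal_ne_top) fun η hη => ?_
  obtain ⟨B, hbox, hcov, hvol⟩ := hE η hη
  choose a b hab using hbox
  refine ⟨fun n => euclideanBox (extend σ (a n) fun _ => -R) (extend σ (b n) fun _ => R),
    fun n => isBox_euclideanBox _ _, ?_, fun n => ?_⟩
  · rintro x ⟨hxE, hxR⟩
    obtain ⟨n, hn⟩ := mem_iUnion.1 (hcov hxE)
    rw [hab n] at hn
    refine mem_iUnion.2 ⟨n, fun t => ?_⟩
    by_cases ht : ∃ i, σ i = t
    · obtain ⟨i, rfl⟩ := ht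
      simpa only [σ.injective.extend_apply] using hn i
    · rw [extend_apply' _ _ _ ht, extend_apply' _ _ _ ht]
      exact abs_le.1 (hxR t)
  · have hB : B n = euclideanBox (a n) (b n) := hab n
    rw [volume_euclideanBox_extend, ← hB, sub_neg_eq_add, ← two_mul]
    gcongr
    exact hvol n

lemma preimage_embedding (σ : Fin d ↪ Fin k) (hE : Microscopic E) :
    Microscopic {x : EuclideanSpace ℝ (Fin k) | WithLp.toLp 2 (fun i => x (σ i)) ∈ E} := by
  refine (iUnion fun n : ℕ => preimage_inter_cube σ n hE).mono fun x hx => ?_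
  obtain ⟨n, hn⟩ := exists_nat_ge ‖x‖
  exact mem_iUnion.2 ⟨n, hx, fun t => (PiLp.norm_apply_le x t).trans hn⟩

end Microscopic

theorem stmt12
    (d m : ℕ)
    (E : Set (EuclideanSpace ℝ (Fin d))) (F : Set (EuclideanSpace ℝ (Fin m)))
    (hE : Microscopic E) (hF : Microscopic F) :
    Microscopic {x : EuclideanSpace ℝ (Fin (d + m)) |
      WithLp.toLp 2 (fun i : Fin d => x (Fin.castAdd m i)) ∈ E ∨
      WithLp.toLp 2 (fun j : Fin m => x (Fin.natAdd d j)) ∈ F} :=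
  (hE.preimage_embedding (Fin.castAddEmb m)).union (hF.preimage_embedding (Fin.natAddEmb d))
end

section
/- Let d be a positive integer. If X ⊆ ℝ^d is microscopic, then the Hausdorff dimension of X is at most d−1. -/
/-!
Work in `Fin d → ℝ` with the sup metric, where boxes are the order intervals `Icc a b`. Fix
`s > d - 1` and a ball of radius `R`, and use microscopicity with `ε = θ ^ d`. The `n`-th box has
volume at most `θ ^ (d (n + 1))`, so once intersected with the ball it has a side of length at most
`η = θ ^ (n + 1)` and all sides at most `2R`; a grid of cubes of side `η` covers it with
`O(η ^ (1 - d))` pieces, of total `s`-cost `O(η ^ (s - d + 1))`. Summing over `n` gives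
`O(θ ^ (s - d + 1))`, which tends to `0` with `θ`, so `μH[s] X = 0`.
-/

open Filter Set Topology MeasureTheory
open scoped ENNReal NNReal

open Metric

theorem tsum_ofReal_mul_pow_succ_le {c q : ℝ} (hc : 0 ≤ c) (hq : 0 ≤ q) (hq₂ : q ≤ 2⁻¹) :
    ∑' n : ℕ, ENNReal.ofReal (c * q ^ (n + 1)) ≤ ENNReal.ofReal (2 * c * q) := by
  have hq₁ : q < 1 := by linarith
  have hterm : ∀ n : ℕ, c * q ^ (n + 1) = c * q * q ^ n := fun n => by ring
  rw [← ENNReal.ofReal_tsum_of_nonneg (fun n => by positivity)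
    (by simpa only [hterm] using (summable_geometric_of_lt_one hq hq₁).mul_left (c * q))]
  refine ENNReal.ofReal_le_ofReal ?_
  have hinv : (1 - q)⁻¹ ≤ 2 := inv_le_of_inv_le₀ two_pos (by linarith)
  calc ∑' n, c * q ^ (n + 1) = c * q * (1 - q)⁻¹ := by
        rw [funext hterm, tsum_mul_left, tsum_geometric_of_lt_one hq hq₁]
    _ ≤ c * q * 2 := by gcongr
    _ = 2 * c * q := by ring

theorem hausdorffMeasure_eq_zero_of_forall_exists_cover {X : Type*} [EMetricSpace X]
    [MeasurableSpace X] [BorelSpace X] {s : ℝ} {E : Set X}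
    (h : ∀ δ : ℝ, 0 < δ → ∃ T : Set (Set X), T.Countable ∧ E ⊆ ⋃₀ T ∧
      (∀ t ∈ T, ediam t ≤ ENNReal.ofReal δ) ∧ ∑' t : T, ediam (t : Set X) ^ s ≤ ENNReal.ofReal δ) :
    μH[s] E = 0 := by
  choose T hT hcov hdiam hsum using fun j : ℕ => h (1 / (j + 1)) (by positivity)
  have hr : Tendsto (fun j : ℕ => ENNReal.ofReal (1 / (j + 1))) atTop (𝓝 0) := by
    simpa using ENNReal.tendsto_ofReal tendsto_one_div_add_atTop_nhds_zero_nat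
  have := fun j => (hT j).to_subtype
  refine nonpos_iff_eq_zero.1 ?_
  calc μH[s] E ≤ liminf (fun j => ∑' t : T j, ediam (t : Set X) ^ s) atTop :=
        Measure.hausdorffMeasure_le_liminf_tsum s E _ hr (fun j (t : T j) => (t : Set X))
          (Eventually.of_forall fun j t => hdiam j t t.2)
          (Eventually.of_forall fun j => by simpa only [sUnion_eq_iUnion] using hcov j)
    _ ≤ liminf (fun j : ℕ => ENNReal.ofReal (1 / (j + 1))) atTop :=
        liminf_le_liminf (Eventually.of_forall hsum)
    _ = 0 := hr.liminf_eq

theorem eventually_nhdsGT_zero_rpow_le {t c : ℝ} (ht : 0 < t) (hc : 0 < c) :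
    ∀ᶠ θ in 𝓝[>] (0 : ℝ), θ ^ t ≤ c := by
  have hlim : Tendsto (fun θ : ℝ => θ ^ t) (𝓝 0) (𝓝 0) := by
    simpa [Real.zero_rpow ht.ne'] using
      (Real.continuousAt_rpow_const 0 t (Or.inr ht.le)).tendsto
  exact nhdsWithin_le_nhds (hlim.eventually (Iic_mem_nhds hc))

section Grid

variable {ι : Type*}

def boxGrid (a b : ι → ℝ) (η : ℝ) (k : ∀ i, Fin (⌊(b i - a i) / η⌋₊ + 1)) : Set (ι → ℝ) :=
  Icc (fun i => a i + k i * η) (fun i => a i + (k i + 1) * η)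

theorem Icc_subset_iUnion_boxGrid {a b : ι → ℝ} {η : ℝ} (hη : 0 < η) :
    Icc a b ⊆ ⋃ k, boxGrid a b η k := by
  intro x hx
  have hxa : ∀ i, 0 ≤ (x i - a i) / η := fun i => div_nonneg (sub_nonneg.2 (hx.1 i)) hη.le
  have hk : ∀ i, ⌊(x i - a i) / η⌋₊ < ⌊(b i - a i) / η⌋₊ + 1 := fun i =>
    Nat.lt_succ_of_le (Nat.floor_le_floor (by gcongr; exact hx.2 i))
  refine mem_iUnion.2 ⟨fun i => ⟨_, hk i⟩, fun i => ?_, fun i => ?_⟩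
  · calc a i + ⌊(x i - a i) / η⌋₊ * η ≤ a i + (x i - a i) / η * η := by
          gcongr; exact Nat.floor_le (hxa i)
      _ = x i := by field_simp; ring
  · calc x i = a i + (x i - a i) / η * η := by field_simp; ring
      _ ≤ a i + (⌊(x i - a i) / η⌋₊ + 1) * η := by
          gcongr; exact (Nat.lt_floor_add_one _).le

theorem ediam_boxGrid_le [Fintype ι] (a b : ι → ℝ) {η : ℝ} (k : ∀ i, Fin (⌊(b i - a i) / η⌋₊ + 1)) :
    ediam (boxGrid a b η k) ≤ ENNReal.ofReal η := by
  rw [boxGrid, ← pi_univ_Icc]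
  refine ediam_pi_le_of_le fun i => ?_
  rw [Real.ediam_Icc]
  exact le_of_eq (by congr 1; ring)

theorem prod_floor_div_add_one_le [Fintype ι] {a b : ι → ℝ} {η L : ℝ} (hη : 0 < η) (hL : 0 ≤ L)
    (hab : ∀ i, b i - a i ≤ L) {i₀ : ι} (hi₀ : b i₀ - a i₀ ≤ η) :
    ∏ i, ((⌊(b i - a i) / η⌋₊ : ℝ) + 1) ≤
      2 * (L / η + 1) ^ (Fintype.card ι - 1) := by
  classical
  have hfloor : ∀ i, (⌊(b i - a i) / η⌋₊ : ℝ) ≤ L / η := fun i =>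
    (Nat.cast_le.2 (Nat.floor_le_floor (by gcongr; exact hab i))).trans
      (Nat.floor_le (by positivity))
  have hfloor₀ : (⌊(b i₀ - a i₀) / η⌋₊ : ℝ) ≤ 1 := by
    have : (b i₀ - a i₀) / η ≤ 1 := (div_le_one hη).2 hi₀
    exact_mod_cast (Nat.floor_le_floor this).trans Nat.floor_one.le
  rw [← Finset.mul_prod_erase _ _ (Finset.mem_univ i₀), ← Finset.card_univ,
    ← Finset.card_erase_of_mem (Finset.mem_univ i₀)]
  gcongr
  · linarith
  · exact (Finset.prod_le_prod (fun i _ => by positivity) fun i _ => by linarith [hfloor i])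
      |>.trans_eq (Finset.prod_const _)

theorem exists_sub_le_of_volume_Icc_le [Fintype ι] [Nonempty ι] {a b : ι → ℝ}
    {η : ℝ} (hη : 0 < η) (h : volume (Icc a b) ≤ ENNReal.ofReal η ^ Fintype.card ι) :
    ∃ i, b i - a i ≤ η := by
  by_contra! hlt
  have hprod : η ^ Fintype.card ι < ∏ i, (b i - a i) := by
    simpa using Finset.prod_lt_prod_of_nonempty (f := fun _ => η) (fun _ _ => hη)
      (fun i _ => hlt i) Finset.univ_nonempty
  rw [Real.volume_Icc_pi, ← ENNReal.ofReal_prod_of_nonneg fun i _ => (hη.trans (hlt i)).le,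
    ← ENNReal.ofReal_pow hη.le, ENNReal.ofReal_le_ofReal_iff (by positivity)] at h
  exact h.not_gt hprod

theorem sum_ediam_boxGrid_rpow_le [Fintype ι] [DecidableEq ι] (a b : ι → ℝ) {η s : ℝ}
    (hs : 0 ≤ s) :
    ∑ k, ediam (boxGrid a b η k) ^ s ≤
      ENNReal.ofReal (∏ i, ((⌊(b i - a i) / η⌋₊ : ℝ) + 1)) * ENNReal.ofReal η ^ s := by
  calc ∑ k, ediam (boxGrid a b η k) ^ s ≤ ∑ _k, ENNReal.ofReal η ^ s :=
        Finset.sum_le_sum fun k _ => ENNReal.rpow_le_rpow (ediam_boxGrid_le a b k) hs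
    _ = _ := by
        rw [Finset.sum_const, nsmul_eq_mul, Finset.card_univ, Fintype.card_pi,
          ← ENNReal.ofReal_natCast]
        simp only [Fintype.card_fin]
        push_cast
        rfl

theorem Icc_inter_closedBall_zero_subset [Fintype ι] (a b : ι → ℝ) {R : ℝ} (hR : 0 ≤ R) :
    Icc a b ∩ closedBall 0 R ⊆ Icc (fun i => max (a i) (-R)) (fun i => min (b i) R) := by
  rintro x ⟨hx, hxR⟩
  rw [mem_closedBall_zero_iff, pi_norm_le_iff_of_nonneg hR] at hxR
  exact ⟨fun i => max_le (hx.1 i) (abs_le.1 (hxR i)).1,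
    fun i => le_min (hx.2 i) (abs_le.1 (hxR i)).2⟩

theorem exists_finset_cover_Icc_inter_closedBall [Fintype ι] [Nonempty ι]
    (a b : ι → ℝ) {η R s : ℝ} (hη : 0 < η) (hη₁ : η ≤ 1) (hR : 0 ≤ R) (hs : 0 ≤ s)
    (hvol : volume (Icc a b) ≤ ENNReal.ofReal η ^ Fintype.card ι) :
    ∃ T : Finset (Set (ι → ℝ)), Icc a b ∩ closedBall 0 R ⊆ ⋃₀ ↑T ∧
      (∀ t ∈ T, ediam t ≤ ENNReal.ofReal η) ∧
      ∑ t ∈ T, ediam t ^ s ≤ ENNReal.ofReal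
        (2 * (2 * R + 1) ^ (Fintype.card ι - 1) * η ^ (s - (Fintype.card ι - 1 : ℕ))) := by
  classical
  set m := Fintype.card ι - 1
  set a' : ι → ℝ := fun i => max (a i) (-R)
  set b' : ι → ℝ := fun i => min (b i) R
  have hside : ∀ i, b' i - a' i ≤ 2 * R := fun i => by
    linarith [min_le_right (b i) R, le_max_right (a i) (-R)]
  obtain ⟨i₀, hi₀⟩ := exists_sub_le_of_volume_Icc_le hη <|
    (measure_mono (Icc_subset_Icc (fun i => le_max_left _ _) fun i => min_le_left _ _)).trans hvol
  refine ⟨Finset.univ.image (boxGrid a' b' η), fun x hx => ?_, ?_, ?_⟩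
  · obtain ⟨k, hk⟩ := mem_iUnion.1
      (Icc_subset_iUnion_boxGrid hη (Icc_inter_closedBall_zero_subset a b hR hx))
    exact ⟨_, Finset.mem_coe.2 (Finset.mem_image_of_mem _ (Finset.mem_univ k)), hk⟩
  · simp only [Finset.mem_image]
    rintro _ ⟨k, -, rfl⟩
    exact ediam_boxGrid_le _ _ k
  calc ∑ t ∈ Finset.univ.image (boxGrid a' b' η), ediam t ^ s
      ≤ ∑ k, ediam (boxGrid a' b' η k) ^ s := Finset.sum_image_le_of_nonneg fun _ _ => zero_le
    _ ≤ ENNReal.ofReal (∏ i, ((⌊(b' i - a' i) / η⌋₊ : ℝ) + 1)) * ENNReal.ofReal η ^ s :=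
        sum_ediam_boxGrid_rpow_le a' b' hs
    _ ≤ ENNReal.ofReal (2 * (2 * R / η + 1) ^ m) * ENNReal.ofReal (η ^ s) := by
        rw [ENNReal.ofReal_rpow_of_pos hη]
        gcongr
        exact prod_floor_div_add_one_le hη (by positivity) hside hi₀
    _ = ENNReal.ofReal (2 * (2 * R + η) ^ m * η ^ (s - m)) := by
        rw [← ENNReal.ofReal_mul (by positivity), Real.rpow_sub hη, Real.rpow_natCast]
        congr 1
        field_simp
        rw [div_pow, div_mul_cancel₀ _ (by positivity)]
    _ ≤ _ := ENNReal.ofReal_le_ofReal (by gcongr)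

end Grid

/-- `Microscopic` transported to `ι → ℝ`, where boxes are the order intervals `Icc a b`. -/
def MicroscopicPi {ι : Type*} [Fintype ι] (E : Set (ι → ℝ)) : Prop :=
  ∀ ε : ℝ, 0 < ε → ∃ a b : ℕ → ι → ℝ, E ⊆ ⋃ n, Icc (a n) (b n) ∧
    ∀ n, volume (Icc (a n) (b n)) ≤ ENNReal.ofReal (ε ^ (n + 1))

theorem Microscopic.microscopicPi_image_ofLp {k : ℕ} {X : Set (EuclideanSpace ℝ (Fin k))}
    (hX : Microscopic X) : MicroscopicPi (WithLp.ofLp '' X) := by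
  intro ε hε
  obtain ⟨B, hbox, hcov, hvol⟩ := hX ε hε
  choose a b hB using hbox
  have hB' : ∀ n, B n = WithLp.ofLp ⁻¹' Icc (a n) (b n) := fun n => by
    ext x
    simp [hB n, Pi.le_def, forall_and]
  refine ⟨a, b, ?_, fun n => ?_⟩
  · rintro _ ⟨x, hx, rfl⟩
    simpa only [hB', mem_iUnion, mem_preimage] using hcov hx
  · rw [← (PiLp.volume_preserving_ofLp (Fin k)).measure_preimage
      measurableSet_Icc.nullMeasurableSet, ← hB']
    exact hvol n

namespace MicroscopicPi

variable {ι : Type*} [Fintype ι] {E : Set (ι → ℝ)}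

theorem hausdorffMeasure_inter_closedBall_eq_zero [Nonempty ι] (hE : MicroscopicPi E) {s : ℝ}
    (hs : ((Fintype.card ι - 1 : ℕ) : ℝ) < s) {R : ℝ} (hR : 0 ≤ R) :
    μH[s] (E ∩ closedBall 0 R) = 0 := by
  set m := Fintype.card ι - 1
  set C := 2 * (2 * R + 1) ^ m
  have ht : 0 < s - m := sub_pos.2 hs
  refine hausdorffMeasure_eq_zero_of_forall_exists_cover fun δ hδ => ?_
  obtain ⟨θ, hθ₀, hθ, hθt⟩ : ∃ θ : ℝ, 0 < θ ∧ θ ≤ min 1 δ ∧ θ ^ (s - m) ≤ min 2⁻¹ (δ / (2 * C)) :=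
    (eventually_mem_nhdsWithin.and <|
      (eventually_le_nhds (lt_min one_pos hδ) |>.filter_mono nhdsWithin_le_nhds).and <|
        eventually_nhdsGT_zero_rpow_le ht (by positivity)).exists
  obtain ⟨hθ₁, hθδ⟩ := le_min_iff.1 hθ
  obtain ⟨hθt, hCθδ⟩ := le_min_iff.1 hθt
  obtain ⟨a, b, hcov, hvol⟩ := hE (θ ^ Fintype.card ι) (by positivity)
  have hbox := fun n => exists_finset_cover_Icc_inter_closedBall (s := s) (a n) (b n)
    (pow_pos hθ₀ (n + 1)) (pow_le_one₀ hθ₀.le hθ₁) hR ((Nat.cast_nonneg _).trans hs.le)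
    ((hvol n).trans_eq (by rw [← ENNReal.ofReal_pow (by positivity), ← pow_mul, ← pow_mul,
      mul_comm]))
  choose T hTcov hTdiam hTsum using hbox
  refine ⟨⋃ n, ↑(T n), countable_iUnion fun n => (T n).countable_toSet, ?_, ?_, ?_⟩
  · rintro x ⟨hxE, hxR⟩
    obtain ⟨n, hn⟩ := mem_iUnion.1 (hcov hxE)
    obtain ⟨t, ht, hxt⟩ := hTcov n ⟨hn, hxR⟩
    exact ⟨t, mem_iUnion.2 ⟨n, ht⟩, hxt⟩
  · intro t ht
    obtain ⟨n, hn⟩ := mem_iUnion.1 ht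
    exact (hTdiam n t hn).trans (ENNReal.ofReal_le_ofReal ((pow_le_of_le_one hθ₀.le hθ₁
      n.succ_ne_zero).trans hθδ))
  calc _ ≤ ∑' n, ∑' t : (T n : Set (Set (ι → ℝ))), ediam (t : Set (ι → ℝ)) ^ s :=
        ENNReal.tsum_iUnion_le_tsum (fun t => ediam t ^ s) _
    _ ≤ ∑' n : ℕ, ENNReal.ofReal (C * (θ ^ (s - m)) ^ (n + 1)) := by
        refine ENNReal.tsum_le_tsum fun n => ?_
        rw [Finset.tsum_subtype' (T n) fun t => ediam t ^ s, Real.rpow_pow_comm hθ₀.le]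
        exact hTsum n
    _ ≤ ENNReal.ofReal (2 * C * θ ^ (s - m)) :=
        tsum_ofReal_mul_pow_succ_le (by positivity) (by positivity) hθt
    _ ≤ ENNReal.ofReal δ := ENNReal.ofReal_le_ofReal ((le_div_iff₀' (by positivity)).1 hCθδ)

theorem dimH_le (hE : MicroscopicPi E) : dimH E ≤ ((Fintype.card ι - 1 : ℕ) : ℝ≥0∞) := by
  cases isEmpty_or_nonempty ι
  · simp [dimH_subsingleton subsingleton_of_subsingleton]
  refine _root_.dimH_le fun s hs => le_of_not_gt fun hlt => ?_
  have hnull : μH[s] E = 0 := by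
    rw [← inter_univ E, ← iUnion_closedBall_nat 0, inter_iUnion, measure_iUnion_null_iff]
    exact fun n => hE.hausdorffMeasure_inter_closedBall_eq_zero (by exact_mod_cast hlt)
      n.cast_nonneg
  exact ENNReal.zero_ne_top (hnull ▸ hs)

end MicroscopicPi

theorem stmt14_general
    (d : ℕ) (X : Set (EuclideanSpace ℝ (Fin d)))
    (hX : Microscopic X) :
    dimH X ≤ ((d - 1 : ℕ) : ℝ≥0∞) := by
  rw [← (PiLp.continuousLinearEquiv 2 ℝ fun _ : Fin d => ℝ).dimH_image X,
    PiLp.coe_continuousLinearEquiv]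
  simpa only [Fintype.card_fin] using hX.microscopicPi_image_ofLp.dimH_le

theorem stmt14
    (d : ℕ) (hd : 0 < d) (X : Set (EuclideanSpace ℝ (Fin d)))
    (hX : Microscopic X) :
    dimH X ≤ ((d - 1 : ℕ) : ℝ≥0∞) :=
  stmt14_general d X hX
end

section
/- Let d be a positive integer. There exists a microscopic set X ⊆ ℝ^d whose Hausdorff dimension is exactly d−1 (for instance X = {0} × ℝ^{d−1}). -/
open Filter Set Topology MeasureTheory
open scoped ENNReal NNReal

/-! The coordinate hyperplane `{x | x 0 = 0}` is covered by the boxes `{0} × [-n, n]^(d-1)`,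
each of Lebesgue measure zero, so it is microscopic for every `ε` at once; being a linear
subspace of dimension `d - 1`, it has Hausdorff dimension `d - 1`. -/

theorem volume_euclideanSpace_box {ι : Type*} [Fintype ι] (a b : ι → ℝ) :
    volume {x : EuclideanSpace ℝ ι | ∀ i, x i ∈ Icc (a i) (b i)} =
      ∏ i, ENNReal.ofReal (b i - a i) := by
  have hbox : {x : EuclideanSpace ℝ ι | ∀ i, x i ∈ Icc (a i) (b i)} =
      WithLp.ofLp ⁻¹' Icc a b := by
    ext x; simp [Pi.le_def, forall_and]
  rw [hbox, (PiLp.volume_preserving_ofLp ι).measure_preimage measurableSet_Icc.nullMeasurableSet,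
    Real.volume_Icc_pi]

theorem Microscopic.of_subset_iUnion_null_boxes {k : ℕ} {X : Set (EuclideanSpace ℝ (Fin k))}
    {B : ℕ → Set (EuclideanSpace ℝ (Fin k))} (hB : ∀ n, IsBox (B n))
    (hB₀ : ∀ n, volume (B n) = 0) (hX : X ⊆ ⋃ n, B n) : Microscopic X :=
  fun _ _ => ⟨B, hB, hX, fun n => (hB₀ n).trans_le zero_le⟩

theorem microscopic_setOf_apply_eq {k : ℕ} (i : Fin k) (c : ℝ) :
    Microscopic {x : EuclideanSpace ℝ (Fin k) | x i = c} := by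
  let a (n : ℕ) : Fin k → ℝ := Function.update (fun _ => -n) i c
  let b (n : ℕ) : Fin k → ℝ := Function.update (fun _ => n) i c
  refine Microscopic.of_subset_iUnion_null_boxes
    (B := fun n => {x | ∀ j, x j ∈ Icc (a n j) (b n j)}) (fun n => ⟨a n, b n, rfl⟩) (fun n => ?_)
    (fun x hx => mem_iUnion.2 ⟨⌈‖x‖⌉₊, fun j => ?_⟩)
  · rw [volume_euclideanSpace_box]
    exact Finset.prod_eq_zero (Finset.mem_univ i) (by simp [a, b])
  · rcases eq_or_ne j i with rfl | hj
    · simp [a, b, hx.symm]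
    · simp only [a, b, Function.update_of_ne hj]
      exact abs_le.1 ((PiLp.norm_apply_le x j).trans (Nat.le_ceil _))

theorem Submodule.dimH_coe {E : Type*} [NormedAddCommGroup E] [NormedSpace ℝ E]
    [FiniteDimensional ℝ E] (K : Submodule ℝ E) : dimH (K : Set E) = Module.finrank ℝ K := by
  have hK : (K : Set E) = ((↑) : K → E) '' univ := by simp
  rw [hK, isometry_subtype_coe.dimH_image, Real.dimH_univ_eq_finrank]

theorem dimH_setOf_apply_eq_zero {k : ℕ} (i : Fin k) :
    dimH {x : EuclideanSpace ℝ (Fin k) | x i = 0} = (k - 1 : ℕ) := by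
  let f : Module.Dual ℝ (EuclideanSpace ℝ (Fin k)) := (EuclideanSpace.proj i).toLinearMap
  have hf : f ≠ 0 := fun h => by simpa [f] using LinearMap.congr_fun h (EuclideanSpace.single i 1)
  have hrank := f.finrank_ker_add_one_of_ne_zero hf
  rw [finrank_euclideanSpace_fin] at hrank
  rw [show {x : EuclideanSpace ℝ (Fin k) | x i = 0} = LinearMap.ker f from rfl,
    Submodule.dimH_coe, Nat.eq_sub_of_add_eq hrank]

theorem stmt15 (d : ℕ) (hd : 0 < d) :
    ∃ X : Set (EuclideanSpace ℝ (Fin d)),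
      Microscopic X ∧ dimH X = ((d - 1 : ℕ) : ℝ≥0∞) :=
  ⟨{x | x ⟨0, hd⟩ = 0}, microscopic_setOf_apply_eq _ 0, dimH_setOf_apply_eq_zero _⟩
end

section
/- Let d be a positive integer. There exists a compact set C ⊆ ℝ^d with Hausdorff dimension 0 that is not microscopic. -/
open Filter Set Topology MeasureTheory
open scoped ENNReal NNReal

/-!
Take `C = K^d`, where `K ⊆ ℝ` consists of the sums `∑ aₜ wₜ` with digits `aₜ ∈ {0,1,2,3}` and
super-exponentially decaying weights `wₜ = 8^(-2^t)`. At level `k` the set is covered by `4^(dk)`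
cells of diameter `O(w_k)`, and `4^(dk) w_k^s → 0` for every `s > 0`, so `hdim C = 0`.

On the other hand, the uniform measure on digit arrays pushes forward onto `C`. For
`ε = 8^(-3d)`, a box of volume `≤ ε^(n+1)` has a side shorter than `w_j / 2` with
`j = ⌊log₂(2n+2)⌋`, and such a side pins down the first `j + 1` digits of that coordinate, so the
box has mass at most `4^(-(j+1)) ≤ 1/(4(n+1)²)`. These masses sum to `π²/24 < 1`, so no such
sequence of boxes covers `C`.
-/

namespace SparseCantor

noncomputable section

def weight (t : ℕ) : ℝ := 8⁻¹ ^ 2 ^ t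

lemma weight_pos (t : ℕ) : 0 < weight t := by unfold weight; positivity

lemma weight_le_inv_eight (t : ℕ) : weight t ≤ 8⁻¹ :=
  pow_le_of_le_one (by norm_num) (by norm_num) (pow_pos two_pos t).ne'

lemma weight_succ (t : ℕ) : weight (t + 1) = weight t ^ 2 := by
  simp only [weight, pow_succ, pow_mul]

lemma weight_anti : Antitone weight := fun _ _ h =>
  pow_le_pow_of_le_one (by norm_num) (by norm_num) (Nat.pow_le_pow_right two_pos h)

lemma weight_add_le (m i : ℕ) : weight (m + i) ≤ weight m * 8⁻¹ ^ i := by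
  induction i with
  | zero => simp
  | succ i ih =>
    rw [← add_assoc, weight_succ, sq, pow_succ, ← mul_assoc]
    exact mul_le_mul ih (weight_le_inv_eight _) (weight_pos _).le
      (mul_nonneg (weight_pos m).le (by positivity))

lemma hasSum_inv_eight_pow : HasSum (fun i : ℕ => (8⁻¹ : ℝ) ^ i) (1 - 8⁻¹)⁻¹ :=
  hasSum_geometric_of_lt_one (by norm_num) (by norm_num)

lemma three_mul_weight_add_le (m i : ℕ) : 3 * weight (i + m) ≤ 3 * weight m * 8⁻¹ ^ i := by
  rw [add_comm, mul_assoc]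
  gcongr
  exact weight_add_le m i

lemma summable_of_abs_le_weight {g : ℕ → ℝ} (hg : ∀ t, |g t| ≤ 3 * weight t) : Summable g :=
  .of_norm_bounded (hasSum_inv_eight_pow.mul_left (3 * weight 0)).summable fun t =>
    (hg t).trans (by simpa using three_mul_weight_add_le 0 t)

lemma abs_tsum_le_of_eq_zero {g : ℕ → ℝ} {m : ℕ} (hg : ∀ t, |g t| ≤ 3 * weight t)
    (h0 : ∀ t < m, g t = 0) : |∑' t, g t| ≤ 4 * weight m := by
  have hs := summable_of_abs_le_weight hg
  rw [← hs.sum_add_tsum_nat_add m, Finset.sum_eq_zero fun t ht => h0 t (Finset.mem_range.1 ht),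
    zero_add]
  calc ‖∑' i, g (i + m)‖
      ≤ 3 * weight m * (1 - 8⁻¹)⁻¹ :=
        tsum_of_norm_bounded (hasSum_inv_eight_pow.mul_left _) fun i =>
          (hg _).trans (three_mul_weight_add_le m i)
    _ ≤ 4 * weight m := by nlinarith [weight_pos m]

lemma abs_digit_sub_mul_le (a b : Fin 4) (t : ℕ) :
    |((a : ℝ) - b) * weight t| ≤ 3 * weight t := by
  rw [abs_mul, abs_of_pos (weight_pos t)]
  gcongr
  · exact (weight_pos t).le
  have ha : (a : ℝ) ≤ 3 := by exact_mod_cast Nat.le_of_lt_succ a.isLt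
  have hb : (b : ℝ) ≤ 3 := by exact_mod_cast Nat.le_of_lt_succ b.isLt
  rw [abs_le]
  constructor <;> linarith [(a : ℕ).cast_nonneg (α := ℝ), (b : ℕ).cast_nonneg (α := ℝ)]

def digitSum (a : ℕ → Fin 4) : ℝ := ∑' t, (a t : ℝ) * weight t

lemma summable_digit_mul_weight (a : ℕ → Fin 4) : Summable fun t => (a t : ℝ) * weight t :=
  summable_of_abs_le_weight fun t => by simpa using abs_digit_sub_mul_le (a t) 0 t

lemma digitSum_sub (a b : ℕ → Fin 4) :
    digitSum a - digitSum b = ∑' t, ((a t : ℝ) - b t) * weight t := by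
  rw [digitSum, digitSum, ← (summable_digit_mul_weight a).tsum_sub (summable_digit_mul_weight b)]
  simp only [sub_mul]

lemma abs_digitSum_sub_le {a b : ℕ → Fin 4} {m : ℕ} (h : ∀ t < m, a t = b t) :
    |digitSum a - digitSum b| ≤ 4 * weight m := by
  rw [digitSum_sub]
  exact abs_tsum_le_of_eq_zero (fun t => abs_digit_sub_mul_le _ _ t) fun t ht => by simp [h t ht]

/-- The first differing digit dominates the tail, since `4 * weight (t + 1) ≤ weight t / 2`. -/
lemma half_weight_le_abs_digitSum_sub {a b : ℕ → Fin 4} {t : ℕ} (h : ∀ u < t, a u = b u)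
    (hne : a t ≠ b t) : weight t / 2 ≤ |digitSum a - digitSum b| := by
  set g : ℕ → ℝ := fun u => ((a u : ℝ) - b u) * weight u
  have hg : ∀ u, |g u| ≤ 3 * weight u := fun u => abs_digit_sub_mul_le _ _ u
  have hlead : weight t ≤ |g t| := by
    have hval : (a t : ℕ) ≠ b t := Fin.val_ne_of_ne hne
    have : (1 : ℝ) ≤ |(a t : ℝ) - b t| := by
      exact_mod_cast Int.one_le_abs (sub_ne_zero.2 (Int.ofNat_inj.not.2 hval))
    rw [abs_mul, abs_of_pos (weight_pos t)]
    nlinarith [weight_pos t]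
  have hrest : |∑' u, if u = t then 0 else g u| ≤ weight t / 2 := by
    refine (abs_tsum_le_of_eq_zero (m := t + 1) (fun u => ?_) fun u hu => ?_).trans ?_
    · split_ifs
      · simpa using (weight_pos u).le
      · exact hg u
    · rcases (Nat.lt_succ_iff.1 hu).lt_or_eq with hu | rfl
      · simp [g, hu.ne, h u hu]
      · simp
    · rw [weight_succ]
      nlinarith [weight_pos t, weight_le_inv_eight t]
  rw [digitSum_sub, (summable_of_abs_le_weight hg).tsum_eq_add_tsum_ite t]
  have := abs_add_le (g t + ∑' u, if u = t then 0 else g u) (-∑' u, if u = t then 0 else g u)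
  rw [add_neg_cancel_right, abs_neg] at this
  linarith

lemma digit_eq_of_abs_digitSum_sub_lt {a b : ℕ → Fin 4} {j : ℕ}
    (h : |digitSum a - digitSum b| < weight j / 2) : ∀ t ≤ j, a t = b t := by
  intro t
  induction t using Nat.strong_induction_on with
  | _ t ih =>
    intro htj
    by_contra hne
    have := half_weight_le_abs_digitSum_sub (fun u hu => ih u hu (hu.le.trans htj)) hne
    linarith [weight_anti htj]

lemma continuous_digitSum : Continuous digitSum :=
  continuous_tsum (u := fun t => 3 * weight t) (fun t => by fun_prop)
    (summable_of_abs_le_weight fun t => (abs_of_pos (by positivity [weight_pos t])).le)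
    fun t a => by simpa using abs_digit_sub_mul_le (a t) 0 t

lemma tendsto_pow_mul_pow_two_pow {a ρ : ℝ} (ha : a ≠ 0) (hρ0 : 0 < ρ) (hρ1 : ρ < 1) :
    Tendsto (fun n : ℕ => a ^ n * ρ ^ 2 ^ n) atTop (𝓝 0) := by
  refine (summable_of_ratio_test_tendsto_lt_one zero_lt_one
    (.of_forall fun n => by positivity) ?_).tendsto_atTop_zero
  have hratio : ∀ n : ℕ, ‖a ^ (n + 1) * ρ ^ 2 ^ (n + 1)‖ / ‖a ^ n * ρ ^ 2 ^ n‖ = |a| * ρ ^ 2 ^ n :=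
    fun n => by
      rw [norm_mul, norm_mul, norm_pow, norm_pow, norm_pow, norm_pow, Real.norm_eq_abs,
        Real.norm_of_nonneg hρ0.le, pow_succ, pow_succ, pow_mul, sq]
      field_simp
  simp only [hratio]
  simpa using ((tendsto_pow_atTop_nhds_zero_of_lt_one hρ0.le hρ1).comp
    (tendsto_pow_atTop_atTop_of_one_lt one_lt_two)).const_mul |a|

lemma tendsto_weight : Tendsto weight atTop (𝓝 0) :=
  (tendsto_pow_atTop_nhds_zero_of_lt_one (by norm_num) (by norm_num : (8 : ℝ)⁻¹ < 1)).comp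
    (tendsto_pow_atTop_atTop_of_one_lt one_lt_two)

variable {d : ℕ}

def digitPoint (A : Fin d → ℕ → Fin 4) : Fin d → ℝ := fun i => digitSum (A i)

variable (d) in
def cantorDust : Set (Fin d → ℝ) := range digitPoint

lemma isCompact_cantorDust : IsCompact (cantorDust d) :=
  isCompact_range <| continuous_pi fun i => continuous_digitSum.comp (continuous_apply i)

def cell (k : ℕ) (q : Fin d → Fin k → Fin 4) : Set (Fin d → ℝ) :=
  digitPoint '' {A | ∀ i (t : Fin k), A i t = q i t}

lemma cantorDust_subset_iUnion_cell (k : ℕ) : cantorDust d ⊆ ⋃ q, cell k q := by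
  rintro _ ⟨A, rfl⟩
  exact mem_iUnion.2 ⟨fun i t => A i t, A, fun _ _ => rfl, rfl⟩

lemma ediam_cell_le (k : ℕ) (q : Fin d → Fin k → Fin 4) :
    Metric.ediam (cell k q) ≤ ENNReal.ofReal (4 * weight k) := by
  refine Metric.ediam_le ?_
  rintro _ ⟨A, hA, rfl⟩ _ ⟨B, hB, rfl⟩
  rw [edist_dist]
  refine ENNReal.ofReal_le_ofReal <| (dist_pi_le_iff (by positivity [weight_pos k])).2 fun i => ?_
  exact abs_digitSum_sub_le fun t ht => (hA i ⟨t, ht⟩).trans (hB i ⟨t, ht⟩).symm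

lemma dimH_cantorDust : dimH (cantorDust d) = 0 := by
  refine le_antisymm (ENNReal.le_of_forall_pos_le_add fun s hs _ => ?_) zero_le
  rw [zero_add]
  refine dimH_le_of_hausdorffMeasure_ne_top (ne_top_of_le_ne_top ENNReal.zero_ne_top ?_)
  have hdiam : Tendsto (fun k => ENNReal.ofReal (4 * weight k)) atTop (𝓝 0) := by
    simpa using ENNReal.tendsto_ofReal (tendsto_weight.const_mul 4)
  refine (Measure.hausdorffMeasure_le_liminf_sum _ _ _ hdiam (fun k => cell k)
    (.of_forall fun k => ediam_cell_le k) (.of_forall cantorDust_subset_iUnion_cell)).trans ?_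
  set ρ : ℝ := 8⁻¹ ^ (s : ℝ)
  have hsum : ∀ k, ∑ q : Fin d → Fin k → Fin 4, Metric.ediam (cell k q) ^ (s : ℝ) ≤
      ENNReal.ofReal (4 ^ (s : ℝ) * ((4 ^ d) ^ k * ρ ^ 2 ^ k)) := fun k => calc
    _ ≤ ∑ _q : Fin d → Fin k → Fin 4, ENNReal.ofReal (4 * weight k) ^ (s : ℝ) :=
        Finset.sum_le_sum fun q _ => ENNReal.rpow_le_rpow (ediam_cell_le k q) s.coe_nonneg
    _ = ENNReal.ofReal (4 ^ (s : ℝ) * ((4 ^ d) ^ k * ρ ^ 2 ^ k)) := by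
        rw [Finset.sum_const, Finset.card_univ, Fintype.card_fun, Fintype.card_fun,
          ENNReal.ofReal_rpow_of_nonneg (by positivity [weight_pos k]) s.coe_nonneg, nsmul_eq_mul,
          ← ENNReal.ofReal_natCast, ← ENNReal.ofReal_mul (by positivity),
          Real.mul_rpow (by norm_num) (weight_pos k).le, weight, Real.rpow_pow_comm (by norm_num)]
        simp only [Fintype.card_fin, Nat.cast_pow, Nat.cast_ofNat, ← pow_mul]
        ring_nf
  have hlim : Tendsto (fun k : ℕ => ENNReal.ofReal (4 ^ (s : ℝ) * ((4 ^ d) ^ k * ρ ^ 2 ^ k)))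
      atTop (𝓝 0) := by
    simpa using ENNReal.tendsto_ofReal ((tendsto_pow_mul_pow_two_pow (by positivity)
      (by positivity) (Real.rpow_lt_one (by norm_num) (by norm_num) hs)).const_mul _)
  exact (liminf_le_liminf (.of_forall hsum)).trans_eq hlim.liminf_eq

lemma volume_box {k : ℕ} (a b : Fin k → ℝ) :
    volume {x : EuclideanSpace ℝ (Fin k) | ∀ i, x i ∈ Icc (a i) (b i)} =
      ∏ i, ENNReal.ofReal (b i - a i) := by
  have : {x : EuclideanSpace ℝ (Fin k) | ∀ i, x i ∈ Icc (a i) (b i)} =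
      WithLp.ofLp ⁻¹' univ.pi fun i => Icc (a i) (b i) := by
    ext; exact mem_univ_pi.symm
  rw [this, (PiLp.volume_preserving_ofLp _).measure_preimage
    (MeasurableSet.univ_pi fun _ => measurableSet_Icc).nullMeasurableSet, volume_pi_pi]
  simp only [Real.volume_Icc]

lemma IsBox.exists_dist_le {k : ℕ} {B : Set (EuclideanSpace ℝ (Fin k))} (hB : IsBox B)
    (hk : 0 < k) {r : ℝ} (hr : 0 < r) (hvol : volume B ≤ ENNReal.ofReal (r ^ k)) :
    ∃ i, ∀ y ∈ B, ∀ z ∈ B, dist (y i) (z i) ≤ r := by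
  obtain ⟨a, b, rfl⟩ := hB
  suffices ∃ i, b i - a i ≤ r from this.imp fun i hi y hy z hz =>
    (Real.dist_le_of_mem_Icc (hy i) (hz i)).trans hi
  by_contra! hside
  refine hvol.not_gt ?_
  rw [volume_box, ← ENNReal.ofReal_prod_of_nonneg fun i _ => (hr.trans (hside i)).le,
    ENNReal.ofReal_lt_ofReal_iff_of_nonneg (by positivity)]
  calc r ^ k = ∏ _i : Fin k, r := by simp
    _ < ∏ i, (b i - a i) :=
      Finset.prod_lt_prod_of_nonempty (fun _ _ => hr) (fun i _ => hside i) ⟨⟨0, hk⟩, by simp⟩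

lemma tsum_inv_four_mul_succ_sq_lt_one : ∑' n : ℕ, ((4 * (n + 1) ^ 2 : ℕ) : ℝ≥0∞)⁻¹ < 1 := by
  have hzeta : HasSum (fun n : ℕ => 4⁻¹ * (1 / ((n + 1 : ℕ) : ℝ) ^ 2))
      (4⁻¹ * (Real.pi ^ 2 / 6)) :=
    .mul_left _ (by simpa using (hasSum_nat_add_iff' 1).2 hasSum_zeta_two)
  have hterm : ∀ n : ℕ, ((4 * (n + 1) ^ 2 : ℕ) : ℝ≥0∞)⁻¹ =
      ENNReal.ofReal (4⁻¹ * (1 / ((n + 1 : ℕ) : ℝ) ^ 2)) := fun n => by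
    rw [← one_div, ← ENNReal.ofReal_natCast, ← ENNReal.ofReal_one,
      ← ENNReal.ofReal_div_of_pos (by positivity)]
    congr 1
    push_cast
    field_simp
  simp only [hterm]
  rw [← ENNReal.ofReal_tsum_of_nonneg (fun n => by positivity) hzeta.summable, hzeta.tsum_eq,
    ENNReal.ofReal_lt_one]
  nlinarith [Real.pi_le_four, Real.pi_pos]

lemma inv_four_pow_log_le (n : ℕ) :
    (4 : ℝ≥0∞)⁻¹ ^ (Nat.log 2 (2 * n + 2) + 1) ≤ ((4 * (n + 1) ^ 2 : ℕ) : ℝ≥0∞)⁻¹ := by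
  rw [← ENNReal.inv_pow, ENNReal.inv_le_inv]
  have hlt := Nat.lt_pow_succ_log_self one_lt_two (2 * n + 2)
  have : 4 * (n + 1) ^ 2 ≤ 4 ^ (Nat.log 2 (2 * n + 2) + 1) := calc
    4 * (n + 1) ^ 2 = (2 * n + 2) ^ 2 := by ring
    _ ≤ (2 ^ (Nat.log 2 (2 * n + 2) + 1)) ^ 2 := Nat.pow_le_pow_left hlt.le 2
    _ = 4 ^ (Nat.log 2 (2 * n + 2) + 1) := by rw [← pow_mul, mul_comm, pow_mul]; norm_num
  exact_mod_cast this

def digitMeasure (d : ℕ) : Measure (Fin d → ℕ → Fin 4) :=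
  Measure.infinitePi fun _ => Measure.infinitePi fun _ => (PMF.uniformOfFintype (Fin 4)).toMeasure

instance : IsProbabilityMeasure (digitMeasure d) := by
  unfold digitMeasure; infer_instance

lemma digitMeasure_le_of_digit_eq {S : Set (Fin d → ℕ → Fin 4)} {i : Fin d} {j : ℕ}
    (hS : ∀ A ∈ S, ∀ B ∈ S, ∀ t ≤ j, A i t = B i t) : digitMeasure d S ≤ 4⁻¹ ^ (j + 1) := by
  rcases S.eq_empty_or_nonempty with rfl | ⟨A, hA⟩
  · simp
  have hcyl : MeasurableSet (Set.pi (Finset.range (j + 1) : Set ℕ) fun t => {A i t}) :=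
    .pi (Finset.countable_toSet _) fun _ _ => measurableSet_singleton _
  calc digitMeasure d S
      ≤ digitMeasure d (Function.eval i ⁻¹' Set.pi (Finset.range (j + 1)) fun t => {A i t}) :=
        measure_mono fun B hB t ht => hS B hB A hA t (Nat.lt_succ_iff.1 (Finset.mem_range.1 ht))
    _ = ∏ _t ∈ Finset.range (j + 1), (4 : ℝ≥0∞)⁻¹ := by
        rw [digitMeasure, (measurePreserving_eval_infinitePi _ i).measure_preimage
          hcyl.nullMeasurableSet, Measure.infinitePi_pi (μ := fun _ => (PMF.uniformOfFintype
            (Fin 4)).toMeasure) fun _ _ => measurableSet_singleton _]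
        simp [PMF.uniformOfFintype_apply]
    _ = 4⁻¹ ^ (j + 1) := by simp

lemma inv_eight_pow_lt_half_weight (n : ℕ) :
    (8⁻¹ : ℝ) ^ (2 * n + 3) < weight (Nat.log 2 (2 * n + 2)) / 2 := by
  have : (8⁻¹ : ℝ) ^ (2 * n + 2) ≤ weight (Nat.log 2 (2 * n + 2)) :=
    pow_le_pow_of_le_one (by norm_num) (by norm_num) (Nat.pow_log_le_self 2 (by omega))
  rw [pow_succ]
  linarith [pow_pos (by norm_num : (0 : ℝ) < 8⁻¹) (2 * n + 2)]

theorem not_microscopic_toLp_cantorDust (hd : 0 < d) :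
    ¬ Microscopic (WithLp.toLp 2 '' cantorDust d) := by
  intro hmic
  obtain ⟨B, hbox, hcov, hvol⟩ := hmic (8⁻¹ ^ (3 * d)) (by positivity)
  have hthin : ∀ n, ∃ i, ∀ y ∈ B n, ∀ z ∈ B n, dist (y i) (z i) ≤ 8⁻¹ ^ (2 * n + 3) :=
    fun n => IsBox.exists_dist_le (hbox n) hd (by positivity) <| (hvol n).trans <|
      ENNReal.ofReal_le_ofReal <| by
        rw [← pow_mul, ← pow_mul]
        exact pow_le_pow_of_le_one (by norm_num) (by norm_num) (by nlinarith)
  choose i hi using hthin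
  set S : ℕ → Set (Fin d → ℕ → Fin 4) := fun n => {A | WithLp.toLp 2 (digitPoint A) ∈ B n}
  have hmass : ∀ n, digitMeasure d (S n) ≤ ((4 * (n + 1) ^ 2 : ℕ) : ℝ≥0∞)⁻¹ := fun n =>
    (digitMeasure_le_of_digit_eq fun A hA A' hA' => digit_eq_of_abs_digitSum_sub_lt
      ((hi n _ hA _ hA').trans_lt (inv_eight_pow_lt_half_weight n))).trans (inv_four_pow_log_le n)
  have : (1 : ℝ≥0∞) ≤ ∑' n : ℕ, ((4 * (n + 1) ^ 2 : ℕ) : ℝ≥0∞)⁻¹ := calc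
    1 = digitMeasure d univ := measure_univ.symm
    _ ≤ digitMeasure d (⋃ n, S n) := measure_mono fun A _ => by
        simpa [S] using hcov (mem_image_of_mem _ (mem_range_self A))
    _ ≤ ∑' n, digitMeasure d (S n) := measure_iUnion_le _
    _ ≤ _ := ENNReal.tsum_le_tsum hmass
  exact this.not_gt tsum_inv_four_mul_succ_sq_lt_one

end

end SparseCantor

theorem stmt16 (d : ℕ) (hd : 0 < d) :
    ∃ C : Set (EuclideanSpace ℝ (Fin d)),
      IsCompact C ∧ dimH C = 0 ∧ ¬ Microscopic C :=
  ⟨WithLp.toLp 2 '' SparseCantor.cantorDust d,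
    SparseCantor.isCompact_cantorDust.image (PiLp.continuous_toLp 2 _),
    le_antisymm (((PiLp.lipschitzWith_toLp 2 _).dimH_image_le _).trans
      SparseCantor.dimH_cantorDust.le) zero_le,
    SparseCantor.not_microscopic_toLp_cantorDust hd⟩
end

section
/- Define the gauge ζ by ζ(r) = 1/|ln r| for 0 < r ≤ 1/e and ζ(r) = 1 for r > 1/e (and ζ(0)=0). If E ⊆ ℝ satisfies H^ζ(E) = 0, then E is microscopic. -/
open Filter Set Topology MeasureTheory
open scoped ENNReal NNReal

/-!
Take a cover of `E` by sets of diameters `d n ≤ 1/e` with `∑ ζ (d n) < 1 / (2 |log ε|)`. Ranking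
the sets of positive diameter by decreasing diameter, the one of rank `k` has
`(k + 1) ζ (d n) ≤ ∑ ζ < 1 / (2 |log ε|)`, that is `d n < ε ^ (2k + 2)`; so an interval of length
`2 d n ≤ ε ^ (2k + 1)` around it fits into slot `2k`. The sets of diameter zero are empty or points
and fill the odd slots.
-/

theorem ENNReal.ncard_mul_le_tsum {ι : Type*} {a : ι → ℝ≥0∞} {s : Set ι} {c : ℝ≥0∞}
    (h : ∀ i ∈ s, c ≤ a i) : (s.ncard : ℝ≥0∞) * c ≤ ∑' i, a i := by
  by_cases hs : s.Finite
  · rw [Set.ncard_eq_toFinset_card s hs, ← nsmul_eq_mul]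
    exact (Finset.card_nsmul_le_sum _ _ _ (by simpa using h)).trans (ENNReal.sum_le_tsum _)
  · simp [Set.Infinite.ncard hs]

theorem ENNReal.exists_injOn_rank_mul_le_tsum {a : ℕ → ℝ≥0∞} (ha : ∑' n, a n ≠ ∞) :
    ∃ τ : ℕ → ℕ, Set.InjOn τ {n | a n ≠ 0} ∧
      ∀ n, a n ≠ 0 → (τ n + 1 : ℝ≥0∞) * a n ≤ ∑' n, a n := by
  let f : ℕ → ℝ≥0∞ᵒᵈ ×ₗ ℕ := fun n => toLex (OrderDual.toDual (a n), n)
  have hf : Function.Injective f := fun n m h => congrArg (fun p => (ofLex p).2) h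
  have hf_anti : ∀ m n, f m ≤ f n → a n ≤ a m := fun m n h => Prod.Lex.monotone_fst (f m) (f n) h
  let P : ℕ → Set ℕ := fun n => {m | f m < f n}
  have hP : ∀ n, insert n (P n) ⊆ {m | a n ≤ a m} := by
    rintro n m (rfl | hm)
    · exact le_refl (a m)
    · exact hf_anti m n (show f m < f n from hm).le
  have hfin : ∀ n, a n ≠ 0 → (insert n (P n)).Finite := fun n hn =>
    (ENNReal.finite_const_le_of_tsum_ne_top ha hn).subset (hP n)
  have hcard : ∀ n, a n ≠ 0 → (insert n (P n)).ncard = (P n).ncard + 1 := fun n hn =>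
    Set.ncard_insert_of_notMem (lt_irrefl (f n)) ((hfin n hn).subset (subset_insert _ _))
  have hmono : ∀ n m, a m ≠ 0 → f n < f m → (P n).ncard < (P m).ncard := by
    intro n m hm hnm
    have hsub : insert n (P n) ⊆ P m := by
      rintro k (rfl | hk)
      · exact hnm
      · exact lt_trans hk hnm
    rw [← Nat.add_one_le_iff, ← hcard n (ne_bot_of_le_ne_bot hm (hf_anti n m hnm.le))]
    exact Set.ncard_le_ncard hsub ((hfin m hm).subset (subset_insert _ _))
  refine ⟨fun n => (P n).ncard, fun n hn m hm hnm => ?_, fun n hn => ?_⟩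
  · by_contra hne
    rcases lt_or_gt_of_ne (hf.ne hne) with h | h
    · exact (hmono n m hm h).ne hnm
    · exact (hmono m n hn h).ne' hnm
  · have := ENNReal.ncard_mul_le_tsum (hP n)
    rwa [hcard n hn, Nat.cast_succ] at this

theorem lt_pow_of_mul_inv_abs_log_lt {d ε : ℝ} {k : ℕ} (hd0 : 0 < d) (hd1 : d < 1)
    (hε0 : 0 < ε) (hε1 : ε < 1) (h : k * |Real.log d|⁻¹ < |Real.log ε|⁻¹) : d < ε ^ k := by
  have hld := Real.log_neg hd0 hd1
  have hlε := Real.log_neg hε0 hε1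
  rw [abs_of_neg hld, abs_of_neg hlε, ← div_eq_mul_inv, inv_eq_one_div,
    div_lt_div_iff₀ (neg_pos.2 hld) (neg_pos.2 hlε)] at h
  rw [← Real.log_lt_log_iff hd0 (pow_pos hε0 k), Real.log_pow]
  linarith

theorem two_mul_le_pow_of_mul_inv_abs_log_lt {d ε : ℝ} {m : ℕ} (hd0 : 0 < d) (hd1 : d < 1)
    (hε0 : 0 < ε) (hε : ε ≤ 1 / 2) (h : (m + 1) * |Real.log d|⁻¹ < |Real.log ε|⁻¹ / 2) :
    2 * d ≤ ε ^ (2 * m + 1) := by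
  have hlt : d < ε ^ (2 * m + 2) :=
    lt_pow_of_mul_inv_abs_log_lt hd0 hd1 hε0 (by linarith) (by push_cast; linarith)
  rw [pow_succ] at hlt
  nlinarith [pow_pos hε0 (2 * m + 1)]

theorem injective_ite_two_mul {p : ℕ → Prop} [DecidablePred p] {τ : ℕ → ℕ}
    (hτ : InjOn τ {n | p n}) : Function.Injective fun n => if p n then 2 * τ n else 2 * n + 1 := by
  intro n m h
  by_cases hn : p n <;> by_cases hm : p m <;> simp only [hn, hm, if_true, if_false] at h
  · exact hτ hn hm (by omega)
  all_goals omega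

theorem exists_Icc_cover_pow_of_injective {E : Set ℝ} {ε : ℝ} {J : ℕ → ℝ × ℝ} {σ : ℕ → ℕ}
    (hσ : Function.Injective σ) (hE : E ⊆ ⋃ n, Icc (J n).1 (J n).2)
    (hJ : ∀ n, volume (Icc (J n).1 (J n).2) ≤ ENNReal.ofReal (ε ^ (σ n + 1))) :
    ∃ I : ℕ → ℝ × ℝ, E ⊆ ⋃ k, Icc (I k).1 (I k).2 ∧
      ∀ k, volume (Icc (I k).1 (I k).2) ≤ ENNReal.ofReal (ε ^ (k + 1)) := by
  classical
  refine ⟨fun k => if k ∈ range σ then J (Function.invFun σ k) else (1, 0), ?_, fun k => ?_⟩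
  · intro x hx
    obtain ⟨n, hn⟩ := mem_iUnion.1 (hE hx)
    exact mem_iUnion.2 ⟨σ n, by simpa [Function.leftInverse_invFun hσ n] using hn⟩
  · dsimp only
    split_ifs with hk
    · obtain ⟨n, rfl⟩ := hk
      simpa [Function.leftInverse_invFun hσ n] using hJ n
    · simp

theorem microscopicR_of_forall_le {E : Set ℝ} {ε₀ : ℝ} (hε₀ : 0 < ε₀)
    (h : ∀ ε, 0 < ε → ε ≤ ε₀ → ∃ I : ℕ → ℝ × ℝ, E ⊆ ⋃ n, Icc (I n).1 (I n).2 ∧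
      ∀ n, volume (Icc (I n).1 (I n).2) ≤ ENNReal.ofReal (ε ^ (n + 1))) :
    MicroscopicR E := by
  intro ε hε
  obtain ⟨I, hI, hvol⟩ := h (min ε ε₀) (lt_min hε hε₀) (min_le_right _ _)
  exact ⟨I, hI, fun n => (hvol n).trans <| ENNReal.ofReal_le_ofReal <|
    pow_le_pow_left₀ (lt_min hε hε₀).le (min_le_left _ _) _⟩

theorem exists_Icc_cover_of_hausdorffGauge_eq_zero {ξ : ℝ → ℝ} {E : Set ℝ}
    (hE : hausdorffGauge ξ E = 0) {δ : ℝ} (hδ : 0 < δ) {c : ℝ≥0∞} (hc : c ≠ 0) :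
    ∃ y d : ℕ → ℝ, (∀ n, 0 ≤ d n ∧ d n ≤ δ) ∧ E ⊆ ⋃ n, Icc (y n - d n) (y n + d n) ∧
      ∑' n, ENNReal.ofReal (ξ (d n)) < c := by
  have h : (⨅ (G : ℕ → Set ℝ) (_ : E ⊆ ⋃ n, G n) (_ : ∀ n, Metric.ediam (G n) ≤ ENNReal.ofReal δ),
      ∑' n, ENNReal.ofReal (ξ (Metric.ediam (G n)).toReal)) < c := by
    refine lt_of_le_of_lt ?_ (pos_iff_ne_zero.2 hc)
    rw [← hE, hausdorffGauge]
    exact le_iSup₂_of_le δ hδ le_rfl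
  simp only [iInf_lt_iff] at h
  obtain ⟨G, hcov, hdiam, hsum⟩ := h
  refine ⟨fun n => Classical.epsilon (· ∈ G n), fun n => Metric.diam (G n),
    fun n => ⟨Metric.diam_nonneg, ENNReal.toReal_le_of_le_ofReal hδ.le (hdiam n)⟩, ?_, hsum⟩
  intro x hx
  obtain ⟨n, hxn⟩ := mem_iUnion.1 (hcov hx)
  refine mem_iUnion.2 ⟨n, ?_⟩
  rw [← Real.closedBall_eq_Icc, Metric.mem_closedBall]
  exact Metric.dist_le_diam_of_mem' (ne_top_of_le_ne_top ENNReal.ofReal_ne_top (hdiam n))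
    hxn (Classical.epsilon_spec ⟨x, hxn⟩)

theorem stmt17_general
    (ζ : ℝ → ℝ)
    (hζ1 : ∀ r : ℝ, 0 < r → r ≤ Real.exp (-1) → ζ r = 1 / |Real.log r|)
    (E : Set ℝ) (hE : hausdorffGauge ζ E = 0) :
    MicroscopicR E := by
  refine microscopicR_of_forall_le one_half_pos fun ε hε0 hε => ?_
  have hL : 0 < |Real.log ε|⁻¹ / 2 :=
    half_pos (inv_pos.2 (abs_pos.2 (Real.log_neg hε0 (by linarith)).ne))
  obtain ⟨y, d, hd, hcov, hsum⟩ := exists_Icc_cover_of_hausdorffGauge_eq_zero hE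
    (Real.exp_pos (-1)) (ENNReal.ofReal_pos.2 hL).ne'
  have hd1 : ∀ n, d n < 1 := fun n => (hd n).2.trans_lt (Real.exp_lt_one_iff.2 (by norm_num))
  have hζ : ∀ n, 0 < d n → ζ (d n) = |Real.log (d n)|⁻¹ := fun n hn => by
    rw [hζ1 _ hn (hd n).2, one_div]
  have hζ_ne : ∀ n, 0 < d n → ENNReal.ofReal (ζ (d n)) ≠ 0 := fun n hn => by
    rw [hζ n hn, ENNReal.ofReal_ne_zero_iff]
    exact inv_pos.2 (abs_pos.2 (Real.log_neg hn (hd1 n)).ne)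
  obtain ⟨τ, hτ, hτsum⟩ := ENNReal.exists_injOn_rank_mul_le_tsum hsum.ne_top
  refine exists_Icc_cover_pow_of_injective (J := fun n => (y n - d n, y n + d n))
    (injective_ite_two_mul (p := fun n => 0 < d n)
      fun n hn m hm h => hτ (hζ_ne n hn) (hζ_ne m hm) h) hcov fun n => ?_
  dsimp only
  rw [Real.volume_Icc, show y n + d n - (y n - d n) = 2 * d n by ring]
  refine ENNReal.ofReal_le_ofReal ?_
  split_ifs with hdn
  · refine two_mul_le_pow_of_mul_inv_abs_log_lt hdn (hd1 n) hε0 hε ?_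
    rw [← hζ n hdn, ← ENNReal.ofReal_lt_ofReal_iff hL, ENNReal.ofReal_mul (by positivity)]
    exact_mod_cast (hτsum n (hζ_ne n hdn)).trans_lt hsum
  · rw [le_antisymm (not_lt.1 hdn) (hd n).1, mul_zero]
    positivity

theorem stmt17
    (ζ : ℝ → ℝ) (hζ0 : ζ 0 = 0)
    (hζ1 : ∀ r : ℝ, 0 < r → r ≤ Real.exp (-1) → ζ r = 1 / |Real.log r|)
    (hζ2 : ∀ r : ℝ, Real.exp (-1) < r → ζ r = 1)
    (E : Set ℝ) (hE : hausdorffGauge ζ E = 0) :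
    MicroscopicR E :=
  stmt17_general ζ hζ1 E hE
end
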